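/- arXiv:2107.07555 — 14 statements merged into one kernel-verified Lean document; each statement's English description precedes it below -/
import Mathlib

section
/- If C is any maximal configuration on the m×n grid with m,n ≥ 2, then |C| ≥ mn/2, i.e. 2|C| ≥ mn. -/
/-- The m×n grid of lots: rows 1..m (row m southernmost), columns 1..n. -/
def Grid (m n : ℕ) : Finset (ℕ × ℕ) := Finset.Icc 1 m ×ˢ Finset.Icc 1 n

/-- A house at `p` is blocked from sunlight if the lots immediately to its
east `(p.1, p.2+1)`, west `(p.1, p.2-1)` and south `(p.1+1, p.2)` are all occupied.
(For configurations contained in the grid, membership in `C` automatically forces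
these lots to lie in the grid; truncated subtraction sends column 1's western
neighbour to column 0, which is outside the grid.) -/
def Blocked (C : Finset (ℕ × ℕ)) (p : ℕ × ℕ) : Prop :=
  (p.1, p.2 + 1) ∈ C ∧ (p.1, p.2 - 1) ∈ C ∧ (p.1 + 1, p.2) ∈ C

/-- A configuration on the m×n grid is permissible if it lies in the grid and
no house in it is blocked from sunlight. -/
def Permissible (m n : ℕ) (C : Finset (ℕ × ℕ)) : Prop :=
  C ⊆ Grid m n ∧ ∀ p ∈ C, ¬ Blocked C p

/-- A configuration is maximal if it is permissible and no permissible
configuration strictly contains it. -/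
def MaximalConfig (m n : ℕ) (C : Finset (ℕ × ℕ)) : Prop :=
  Permissible m n C ∧ ∀ D : Finset (ℕ × ℕ), Permissible m n D → C ⊆ D → D = C

/-- Lower bound: any maximal configuration on the m×n grid (m,n ≥ 2) has
|C| ≥ mn/2, i.e. 2|C| ≥ mn. -/
theorem lower_bound_half (m n : ℕ) (hm : 2 ≤ m) (hn : 2 ≤ n)
    (C : Finset (ℕ × ℕ)) (hC : MaximalConfig m n C) :
    m * n ≤ 2 * C.card := by
  classical
  obtain ⟨⟨hsub, hnb⟩, hmax⟩ := hC
  -- coordinates of grid members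
  have hgrid : ∀ q : ℕ × ℕ, q ∈ Grid m n ↔ (1 ≤ q.1 ∧ q.1 ≤ m ∧ 1 ≤ q.2 ∧ q.2 ≤ n) := by
    intro q
    simp [Grid, Finset.mem_product, Finset.mem_Icc, and_assoc]
  have hCgrid : ∀ q ∈ C, 1 ≤ q.1 ∧ q.1 ≤ m ∧ 1 ≤ q.2 ∧ q.2 ≤ n := by
    intro q hq; exact (hgrid q).1 (hsub hq)
  -- Key structural lemma from maximality
  have key : ∀ i j : ℕ, (i, j) ∈ Grid m n → (i, j) ∉ C →
      ((i, j+1) ∈ C ∧ (i, j-1) ∈ C ∧ (i+1, j) ∈ C) ∨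
      ((i, j-1) ∈ C ∧ (i, j-2) ∈ C ∧ (i+1, j-1) ∈ C) ∨
      ((i, j+1) ∈ C ∧ (i, j+2) ∈ C ∧ (i+1, j+1) ∈ C) ∨
      ((i-1, j) ∈ C ∧ (i-1, j-1) ∈ C ∧ (i-1, j+1) ∈ C) := by
    intro i j hg hnc
    have hcoord := (hgrid (i, j)).1 hg
    have hi1 : 1 ≤ i := hcoord.1
    have hj1 : 1 ≤ j := hcoord.2.2.1
    -- inserting (i,j) destroys permissibility
    have hins : ¬ Permissible m n (insert (i, j) C) := by
      intro hperm'
      have heq := hmax _ hperm' (Finset.subset_insert _ _)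
      exact hnc (heq ▸ Finset.mem_insert_self (i, j) C)
    have hsub' : insert (i, j) C ⊆ Grid m n := Finset.insert_subset hg hsub
    have hex : ∃ r ∈ insert (i, j) C, Blocked (insert (i, j) C) r := by
      by_contra h
      push_neg at h
      exact hins ⟨hsub', h⟩
    obtain ⟨⟨a, b⟩, hr, hb1, hb2, hb3⟩ := hex
    simp only at hb1 hb2 hb3
    rcases Finset.mem_insert.mp hr with heq | hrC
    · -- the new house itself is blocked
      injection heq with ha hbj
      subst ha; subst hbj
      left
      refine ⟨?_, ?_, ?_⟩
      · rcases Finset.mem_insert.mp hb1 with h | h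
        · exfalso; have := congrArg Prod.snd h; simp at this
        · exact h
      · rcases Finset.mem_insert.mp hb2 with h | h
        · exfalso; have := congrArg Prod.snd h; simp at this; omega
        · exact h
      · rcases Finset.mem_insert.mp hb3 with h | h
        · exfalso; have := congrArg Prod.fst h; simp at this
        · exact h
    · -- an old house (a,b) ∈ C becomes blocked; it was not blocked before
      have hnbr : ¬ Blocked C (a, b) := hnb _ hrC
      have hb : 1 ≤ b := (hCgrid _ hrC).2.2.1
      have ha : 1 ≤ a := (hCgrid _ hrC).1
      rcases Finset.mem_insert.mp hb1 with h1 | h1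
      · -- east neighbour of (a,b) is the new house: (a,b+1) = (i,j)
        have hai : a = i := congrArg Prod.fst h1
        have hbj : b + 1 = j := congrArg Prod.snd h1
        right; left
        have e2 : (a, b - 1) ∈ C := by
          rcases Finset.mem_insert.mp hb2 with h | h
          · exfalso; have h1' := congrArg Prod.snd h; simp at h1'; omega
          · exact h
        have e3 : (a + 1, b) ∈ C := by
          rcases Finset.mem_insert.mp hb3 with h | h
          · exfalso; have h1' := congrArg Prod.fst h; simp at h1'; omega
          · exact h
        have hb' : b = j - 1 := by omega
        have hb'' : b - 1 = j - 2 := by omega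
        rw [← hai, ← hb', ← hb'']
        exact ⟨hrC, e2, e3⟩
      · rcases Finset.mem_insert.mp hb2 with h2 | h2
        · -- west neighbour of (a,b) is the new house: (a,b-1) = (i,j)
          have hai : a = i := congrArg Prod.fst h2
          have hbj : b - 1 = j := congrArg Prod.snd h2
          right; right; left
          have e3 : (a + 1, b) ∈ C := by
            rcases Finset.mem_insert.mp hb3 with h | h
            · exfalso; have h1' := congrArg Prod.fst h; simp at h1'; omega
            · exact h
          have hbeq : b = j + 1 := by omega
          have hbeq2 : b + 1 = j + 2 := by omega
          rw [← hai, ← hbeq, ← hbeq2]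
          exact ⟨hrC, h1, e3⟩
        · rcases Finset.mem_insert.mp hb3 with h3 | h3
          · -- south neighbour of (a,b) is the new house: (a+1,b) = (i,j)
            have hai : a + 1 = i := congrArg Prod.fst h3
            have hbj : b = j := congrArg Prod.snd h3
            right; right; right
            have g1 : ((i:ℕ)-1, j) = (a, b) := by simp only [Prod.mk.injEq]; omega
            have g2 : ((i:ℕ)-1, j-1) = (a, b-1) := by simp only [Prod.mk.injEq]; omega
            have g3 : ((i:ℕ)-1, j+1) = (a, b+1) := by simp only [Prod.mk.injEq]; omega
            exact ⟨g1.symm ▸ hrC, g2.symm ▸ h2, g3.symm ▸ h1⟩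
          · exact absurd ⟨h1, h2, h3⟩ hnbr
  -- the injection from empty lots to occupied lots
  let ec : ℕ × ℕ → Prop := fun p =>
    ((p.1, p.2+1) ∈ C ∧ (p.1, p.2-1) ∈ C ∧ (p.1+1, p.2) ∈ C) ∨
    ((p.1, p.2+1) ∈ C ∧ (p.1, p.2+2) ∈ C ∧ (p.1+1, p.2+1) ∈ C)
  let wc : ℕ × ℕ → Prop := fun p =>
    (p.1, p.2-1) ∈ C ∧ (p.1, p.2-2) ∈ C ∧ (p.1+1, p.2-1) ∈ C
  let f : ℕ × ℕ → ℕ × ℕ := fun p =>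
    if ec p then (p.1, p.2+1) else if wc p then (p.1, p.2-1) else (p.1-1, p.2)
  -- on empty grid lots, the third branch forces the north condition
  have hnc' : ∀ p ∈ Grid m n \ C, ¬ ec p → ¬ wc p →
      (p.1-1, p.2) ∈ C ∧ (p.1-1, p.2-1) ∈ C ∧ (p.1-1, p.2+1) ∈ C := by
    intro p hp hne hnw
    obtain ⟨i, j⟩ := p
    have hpg := (Finset.mem_sdiff.mp hp).1
    have hpc := (Finset.mem_sdiff.mp hp).2
    rcases key i j hpg hpc with h | h | h | h
    · exact absurd (Or.inl h) hne
    · exact absurd h hnw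
    · exact absurd (Or.inr h) hne
    · exact h
  have hmaps : ∀ p ∈ Grid m n \ C, f p ∈ C := by
    intro p hp
    by_cases he : ec p
    · have : f p = (p.1, p.2+1) := if_pos he
      rw [this]
      rcases he with h | h
      · exact h.1
      · exact h.1
    · by_cases hw : wc p
      · have : f p = (p.1, p.2-1) := by simp only [f, if_neg he, if_pos hw]
        rw [this]; exact hw.1
      · have : f p = (p.1-1, p.2) := by simp only [f, if_neg he, if_neg hw]
        rw [this]; exact (hnc' p hp he hw).1
  have hinj : Set.InjOn f ↑(Grid m n \ C) := by
    intro p hp q hq hfpq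
    simp only [Finset.coe_sdiff, Set.mem_diff, Finset.mem_coe] at hp hq
    have hp' : p ∈ Grid m n \ C := Finset.mem_sdiff.mpr ⟨hp.1, hp.2⟩
    have hq' : q ∈ Grid m n \ C := Finset.mem_sdiff.mpr ⟨hq.1, hq.2⟩
    obtain ⟨i, j⟩ := p
    obtain ⟨i', j'⟩ := q
    have hjg : 1 ≤ j := ((hgrid _).1 hp.1).2.2.1
    have hjg' : 1 ≤ j' := ((hgrid _).1 hq.1).2.2.1
    have hpc : (i, j) ∉ C := hp.2
    have hqc : (i', j') ∉ C := hq.2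
    -- auxiliary bounds from the west condition: column index ≥ 3
    have hwb : ∀ a b : ℕ, wc (a, b) → 3 ≤ b := by
      intro a b hw
      have := (hCgrid _ hw.2.1).2.2.1
      simp only at this
      have hb2 : 1 ≤ b - 2 := this
      omega
    -- auxiliary bound from the north condition: row index ≥ 2
    have hnbd : ∀ a b : ℕ, (a-1, b) ∈ C → 2 ≤ a ∨ a = 0 ∨ (a = 1 ∧ (0, b) ∈ C) := by
      intro a b h
      have := (hCgrid _ h).1
      simp only at this
      omega
    by_cases he : ec (i, j) <;> by_cases he' : ec (i', j')
    · -- both east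
      have h1 : f (i, j) = (i, j+1) := if_pos he
      have h2 : f (i', j') = (i', j'+1) := if_pos he'
      rw [h1, h2] at hfpq
      simp only [Prod.mk.injEq] at hfpq ⊢
      omega
    · by_cases hw' : wc (i', j')
      · -- p east, q west : contradiction
        exfalso
        have h1 : f (i, j) = (i, j+1) := if_pos he
        have h2 : f (i', j') = (i', j'-1) := by simp only [f, if_neg he', if_pos hw']
        rw [h1, h2] at hfpq
        obtain ⟨ha, hb⟩ := Prod.mk.injEq .. ▸ hfpq
        have h3 : 3 ≤ j' := hwb _ _ hw'
        have : (i', j'-2) ∈ C := hw'.2.1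
        have hEq : ((i':ℕ), j'-2) = (i, j) := by simp only [Prod.mk.injEq]; omega
        exact hpc (hEq ▸ this)
      · -- p east, q north : contradiction
        exfalso
        have hnq := hnc' _ hq' he' hw'
        have h1 : f (i, j) = (i, j+1) := if_pos he
        have h2 : f (i', j') = (i'-1, j') := by simp only [f, if_neg he', if_neg hw']
        rw [h1, h2] at hfpq
        obtain ⟨ha, hb⟩ := Prod.mk.injEq .. ▸ hfpq
        have : (i'-1, j'-1) ∈ C := hnq.2.1
        have hEq : ((i':ℕ)-1, j'-1) = (i, j) := by simp only [Prod.mk.injEq]; omega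
        exact hpc (hEq ▸ this)
    · by_cases hw : wc (i, j)
      · -- p west, q east : contradiction (symmetric)
        exfalso
        have h1 : f (i, j) = (i, j-1) := by simp only [f, if_neg he, if_pos hw]
        have h2 : f (i', j') = (i', j'+1) := if_pos he'
        rw [h1, h2] at hfpq
        obtain ⟨ha, hb⟩ := Prod.mk.injEq .. ▸ hfpq
        have h3 : 3 ≤ j := hwb _ _ hw
        have : (i, j-2) ∈ C := hw.2.1
        have hEq : ((i:ℕ), j-2) = (i', j') := by simp only [Prod.mk.injEq]; omega
        exact hqc (hEq ▸ this)
      · -- p north, q east : contradiction (symmetric)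
        exfalso
        have hnp := hnc' _ hp' he hw
        have h1 : f (i, j) = (i-1, j) := by simp only [f, if_neg he, if_neg hw]
        have h2 : f (i', j') = (i', j'+1) := if_pos he'
        rw [h1, h2] at hfpq
        obtain ⟨ha, hb⟩ := Prod.mk.injEq .. ▸ hfpq
        have : (i-1, j-1) ∈ C := hnp.2.1
        have hEq : ((i:ℕ)-1, j-1) = (i', j') := by simp only [Prod.mk.injEq]; omega
        exact hqc (hEq ▸ this)
    · by_cases hw : wc (i, j) <;> by_cases hw' : wc (i', j')
      · -- both west
        have h1 : f (i, j) = (i, j-1) := by simp only [f, if_neg he, if_pos hw]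
        have h2 : f (i', j') = (i', j'-1) := by simp only [f, if_neg he', if_pos hw']
        rw [h1, h2] at hfpq
        obtain ⟨ha, hb⟩ := Prod.mk.injEq .. ▸ hfpq
        have h3 : 3 ≤ j := hwb _ _ hw
        have h3' : 3 ≤ j' := hwb _ _ hw'
        simp only [Prod.mk.injEq]
        omega
      · -- p west, q north : contradiction
        exfalso
        have hnq := hnc' _ hq' he' hw'
        have h1 : f (i, j) = (i, j-1) := by simp only [f, if_neg he, if_pos hw]
        have h2 : f (i', j') = (i'-1, j') := by simp only [f, if_neg he', if_neg hw']
        rw [h1, h2] at hfpq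
        obtain ⟨ha, hb⟩ := Prod.mk.injEq .. ▸ hfpq
        have h3 : 3 ≤ j := hwb _ _ hw
        have : (i'-1, j'+1) ∈ C := hnq.2.2
        have hEq : ((i':ℕ)-1, j'+1) = (i, j) := by simp only [Prod.mk.injEq]; omega
        exact hpc (hEq ▸ this)
      · -- p north, q west : contradiction
        exfalso
        have hnp := hnc' _ hp' he hw
        have h1 : f (i, j) = (i-1, j) := by simp only [f, if_neg he, if_neg hw]
        have h2 : f (i', j') = (i', j'-1) := by simp only [f, if_neg he', if_pos hw']
        rw [h1, h2] at hfpq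
        obtain ⟨ha, hb⟩ := Prod.mk.injEq .. ▸ hfpq
        have h3 : 3 ≤ j' := hwb _ _ hw'
        have : (i-1, j+1) ∈ C := hnp.2.2
        have hEq : ((i:ℕ)-1, j+1) = (i', j') := by simp only [Prod.mk.injEq]; omega
        exact hqc (hEq ▸ this)
      · -- both north
        have hnp := hnc' _ hp' he hw
        have hnq := hnc' _ hq' he' hw'
        have h1 : f (i, j) = (i-1, j) := by simp only [f, if_neg he, if_neg hw]
        have h2 : f (i', j') = (i'-1, j') := by simp only [f, if_neg he', if_neg hw']
        rw [h1, h2] at hfpq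
        obtain ⟨ha, hb⟩ := Prod.mk.injEq .. ▸ hfpq
        have hi2 : 1 ≤ i - 1 := (hCgrid _ hnp.1).1
        have hi2' : 1 ≤ i' - 1 := (hCgrid _ hnq.1).1
        simp only [Prod.mk.injEq]
        omega
  have hcard : (Grid m n \ C).card ≤ C.card :=
    Finset.card_le_card_of_injOn f hmaps hinj
  have hsd : (Grid m n \ C).card + C.card = (Grid m n).card :=
    Finset.card_sdiff_add_card_eq_card hsub
  have hgc : (Grid m n).card = m * n := by
    simp [Grid, Nat.card_Icc]
  omega
end

section
/- If C is any maximal configuration on the m×n grid with m,n ≥ 2, then |C| ≤ (3/4)mn + (m-1)/2 + n/4, equivalently 4|C| ≤ 3mn + 2m + n - 2. -/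
/-- Boundary count: the elements of `S` missing a neighbour are at most
`2·(n - |S|) + 2` in number (stated additively). -/
lemma aux_bad (n : ℕ) (S : Finset ℕ) (hS : S ⊆ Finset.Icc 1 n) :
    (S.filter fun j => ¬(j + 1 ∈ S ∧ j - 1 ∈ S)).card + 2 * S.card ≤ 2 * n + 2 := by
  classical
  set Sbad := S.filter fun j => ¬(j + 1 ∈ S ∧ j - 1 ∈ S) with hSbad
  set G := (Finset.Icc 1 n) \ S with hG
  have hGS : G.card + S.card = n := by
    have := Finset.card_sdiff_add_card_eq_card hS
    simpa [Nat.card_Icc] using this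
  have h1 : Sbad.card ≤ (Sbad \ ({1, n} : Finset ℕ)).card + 2 := by
    refine (Finset.card_le_card_sdiff_add_card (t := ({1, n} : Finset ℕ))).trans ?_
    have : ({1, n} : Finset ℕ).card ≤ 2 := (Finset.card_insert_le _ _).trans (by simp)
    omega
  have h2 : (Sbad \ ({1, n} : Finset ℕ)).card ≤ 2 * G.card := by
    apply Finset.card_le_mul_card_image_of_maps_to
      (f := fun j => if j - 1 ∈ S then j + 1 else j - 1)
    · intro j hj
      simp only [hSbad, Finset.mem_sdiff, Finset.mem_filter, Finset.mem_insert,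
        Finset.mem_singleton] at hj
      obtain ⟨⟨hjS, hnb⟩, hne⟩ := hj
      have hj1 : 1 ≤ j := (Finset.mem_Icc.mp (hS hjS)).1
      have hjn : j ≤ n := (Finset.mem_Icc.mp (hS hjS)).2
      have hj2 : 2 ≤ j := by omega
      have hjn1 : j + 1 ≤ n := by omega
      by_cases hw : j - 1 ∈ S
      · have he : j + 1 ∉ S := fun he => hnb ⟨he, hw⟩
        rw [if_pos hw]
        simp only [hG, Finset.mem_sdiff, Finset.mem_Icc]
        exact ⟨⟨by omega, hjn1⟩, he⟩
      · rw [if_neg hw]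
        simp only [hG, Finset.mem_sdiff, Finset.mem_Icc]
        exact ⟨⟨by omega, by omega⟩, hw⟩
    · intro g hg
      have hsub : ((Sbad \ ({1, n} : Finset ℕ)).filter
          fun j => (if j - 1 ∈ S then j + 1 else j - 1) = g)
          ⊆ ({g - 1, g + 1} : Finset ℕ) := by
        intro j hj
        simp only [Finset.mem_filter] at hj
        obtain ⟨hj', hcj⟩ := hj
        have hj2 : 2 ≤ j := by
          simp only [hSbad, Finset.mem_sdiff, Finset.mem_filter, Finset.mem_insert,
            Finset.mem_singleton] at hj'
          have h1j := (Finset.mem_Icc.mp (hS hj'.1.1)).1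
          omega
        simp only [Finset.mem_insert, Finset.mem_singleton]
        by_cases hw : j - 1 ∈ S
        · rw [if_pos hw] at hcj; omega
        · rw [if_neg hw] at hcj; omega
      exact (Finset.card_le_card hsub).trans
        ((Finset.card_insert_le _ _).trans (by simp))
  omega

/-- Row inequality: if no triple `j-1, j, j+1` in `S` sits above an element `j ∈ T`,
then `3|S| + |T| ≤ 3n + 2`. -/
lemma row_ineq (n : ℕ) (S T : Finset ℕ) (hS : S ⊆ Finset.Icc 1 n) (hT : T ⊆ Finset.Icc 1 n)
    (h : ∀ j ∈ S, ¬(j + 1 ∈ S ∧ j - 1 ∈ S ∧ j ∈ T)) :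
    3 * S.card + T.card ≤ 3 * n + 2 := by
  classical
  set B := S.filter (fun j => j + 1 ∈ S ∧ j - 1 ∈ S) with hB
  have hsplit : B.card + (S.filter fun j => ¬(j + 1 ∈ S ∧ j - 1 ∈ S)).card = S.card :=
    Finset.card_filter_add_card_filter_not _
  have hbad := aux_bad n S hS
  have hdisj : Disjoint B T := by
    rw [Finset.disjoint_left]
    intro j hjB hjT
    simp only [hB, Finset.mem_filter] at hjB
    exact h j hjB.1 ⟨hjB.2.1, hjB.2.2, hjT⟩
  have hBT : B.card + T.card ≤ n := by
    have hsub : B ∪ T ⊆ Finset.Icc 1 n := by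
      intro j hj
      rcases Finset.mem_union.mp hj with hj | hj
      · exact hS (Finset.mem_filter.mp hj).1
      · exact hT hj
    have := Finset.card_le_card hsub
    rw [Finset.card_union_of_disjoint hdisj] at this
    simpa [Nat.card_Icc] using this
  omega

/-- Summation lemma: the row inequalities give the global bound. -/
lemma sum_bound (n : ℕ) (f : ℕ → ℕ) :
    ∀ k : ℕ, (∀ i, 1 ≤ i → i + 1 ≤ k + 1 → 3 * f i + f (i + 1) ≤ 3 * n + 2) →
    4 * ∑ i ∈ Finset.Icc 1 (k + 1), f i ≤ k * (3 * n + 2) + 3 * f (k + 1) + f 1 := by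
  intro k
  induction k with
  | zero => intro _; simp; omega
  | succ k ih =>
    intro h
    rw [show k + 1 + 1 = (k + 1) + 1 from rfl, Finset.sum_Icc_succ_top (by omega)]
    have h1 := ih (fun i hi hik => h i hi (by omega))
    have h2 := h (k + 1) (by omega) (by omega)
    have h3 : (k + 1) * (3 * n + 2) = k * (3 * n + 2) + (3 * n + 2) := by ring
    rw [h3]
    generalize k * (3 * n + 2) = A at *
    omega

/-- Upper bound: any maximal configuration on the m×n grid (m,n ≥ 2) satisfies
4|C| ≤ 3mn + 2m + n - 2 (stated without truncated subtraction as
4|C| + 2 ≤ 3mn + 2m + n). -/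
theorem upper_bound_crude (m n : ℕ) (hm : 2 ≤ m) (hn : 2 ≤ n)
    (C : Finset (ℕ × ℕ)) (hC : MaximalConfig m n C) :
    4 * C.card + 2 ≤ 3 * (m * n) + 2 * m + n := by
  classical
  obtain ⟨⟨hsub, hperm⟩, -⟩ := hC
  set Srow : ℕ → Finset ℕ := fun i => (C.filter fun p => p.1 = i).image Prod.snd with hSrow
  have hmem : ∀ i j, j ∈ Srow i ↔ (i, j) ∈ C := by
    intro i j
    simp only [hSrow, Finset.mem_image, Finset.mem_filter]
    constructor
    · rintro ⟨p, ⟨hpC, hp1⟩, hp2⟩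
      have : p = (i, j) := Prod.ext hp1 hp2
      rwa [this] at hpC
    · intro h
      exact ⟨(i, j), ⟨h, rfl⟩, rfl⟩
  have hcard : ∀ i, (Srow i).card = (C.filter fun p => p.1 = i).card := by
    intro i
    apply Finset.card_image_of_injOn
    intro p hp q hq hpq
    simp only [Finset.mem_coe, Finset.mem_filter] at hp hq
    exact Prod.ext (hp.2.trans hq.2.symm) hpq
  have hSsub : ∀ i, Srow i ⊆ Finset.Icc 1 n := by
    intro i j hj
    have := hsub ((hmem i j).mp hj)
    simp only [Grid, Finset.mem_product] at this
    exact this.2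
  have hfn : ∀ i, (Srow i).card ≤ n := by
    intro i
    have := Finset.card_le_card (hSsub i)
    simpa [Nat.card_Icc] using this
  have hrow : ∀ i, 1 ≤ i → i + 1 ≤ m →
      3 * (Srow i).card + (Srow (i + 1)).card ≤ 3 * n + 2 := by
    intro i _ _
    apply row_ineq n (Srow i) (Srow (i + 1)) (hSsub i) (hSsub (i + 1))
    intro j hj hblock
    apply hperm (i, j) ((hmem i j).mp hj)
    exact ⟨(hmem i (j + 1)).mp hblock.1, (hmem i (j - 1)).mp hblock.2.1,
      (hmem (i + 1) j).mp hblock.2.2⟩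
  have hCcard : C.card = ∑ i ∈ Finset.Icc 1 m, (Srow i).card := by
    rw [Finset.card_eq_sum_card_fiberwise (f := Prod.fst) (t := Finset.Icc 1 m)
      (fun p hp => by
        have := hsub hp
        simp only [Grid, Finset.mem_product] at this
        exact this.1)]
    exact Finset.sum_congr rfl (fun i _ => (hcard i).symm)
  obtain ⟨k, rfl⟩ : ∃ k, m = k + 1 := ⟨m - 1, by omega⟩
  have hsum : 4 * ∑ i ∈ Finset.Icc 1 (k + 1), (Srow i).card ≤
      k * (3 * n + 2) + 3 * (Srow (k + 1)).card + (Srow 1).card :=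
    sum_bound n (fun i => (Srow i).card) k (fun i hi hik => hrow i hi hik)
  rw [hCcard]
  have hk1 := hfn (k + 1)
  have h1 := hfn 1
  nlinarith [hsum, hk1, h1]
end

section
/- If C is any maximal configuration on the m×n grid with m,n ≥ 2, then the number of occupied lots in the two southernmost rows is at least n+2, i.e. |C ∩ ({m-1,m}×[n])| ≥ n+2. -/
lemma mem_grid {m n : ℕ} {p : ℕ × ℕ} (h : p ∈ Grid m n) :
    1 ≤ p.1 ∧ p.1 ≤ m ∧ 1 ≤ p.2 ∧ p.2 ≤ n := by
  simpa [Grid, Finset.mem_product, Finset.mem_Icc, and_assoc] using h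

lemma exists_blocked {m n : ℕ} {C : Finset (ℕ × ℕ)} (hC : MaximalConfig m n C)
    {x : ℕ × ℕ} (hx : x ∈ Grid m n) (hxC : x ∉ C) :
    ∃ p ∈ insert x C, Blocked (insert x C) p := by
  by_contra h
  push_neg at h
  have hperm : Permissible m n (insert x C) := by
    refine ⟨?_, h⟩
    intro q hq
    rcases Finset.mem_insert.mp hq with rfl | hq
    · exact hx
    · exact hC.1.1 hq
  have heq := hC.2 _ hperm (Finset.subset_insert _ _)
  exact hxC (heq ▸ Finset.mem_insert_self x C)

lemma south_forced {m n : ℕ} (hm : 2 ≤ m) {C : Finset (ℕ × ℕ)} (hC : MaximalConfig m n C)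
    {j : ℕ} (hj1 : 1 ≤ j) (hjn : j ≤ n) (h : (m, j) ∉ C) :
    (m - 1, j - 1) ∈ C ∧ (m - 1, j) ∈ C ∧ (m - 1, j + 1) ∈ C ∧ 2 ≤ j ∧ j + 1 ≤ n := by
  have hx : (m, j) ∈ Grid m n := by
    simp only [Grid, Finset.mem_product, Finset.mem_Icc]; omega
  obtain ⟨p, hp, he, hw, hs⟩ := exists_blocked hC hx h
  obtain ⟨a, b⟩ := p
  rcases Finset.mem_insert.mp hp with heq | hpC
  · -- p = (m, j); its south neighbour is (m+1, j), impossible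
    simp only [Prod.mk.injEq] at heq
    obtain ⟨rfl, rfl⟩ := heq
    rcases Finset.mem_insert.mp hs with h' | h'
    · simp [Prod.ext_iff] at h'
    · have := (mem_grid (hC.1.1 h')).2.1; omega
  · have hpg := mem_grid (hC.1.1 hpC)
    simp only at hpg
    rcases Finset.mem_insert.mp hs with hs' | hs'
    · -- south of p is the new house: p = (m-1, j)
      simp only [Prod.mk.injEq] at hs'
      obtain ⟨ha, rfl⟩ := hs'
      have ha' : a = m - 1 := by omega
      subst ha'
      rcases Finset.mem_insert.mp he with he' | he'
      · simp only [Prod.mk.injEq] at he'; omega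
      · rcases Finset.mem_insert.mp hw with hw' | hw'
        · simp only [Prod.mk.injEq] at hw'; omega
        · have hb1 := mem_grid (hC.1.1 hw')
          have hb2 := mem_grid (hC.1.1 he')
          simp only at hb1 hb2
          exact ⟨hw', hpC, he', by omega, by omega⟩
    · -- south of p is in C; then east/west can't be the new house (row m+1 needed)
      have hsg := mem_grid (hC.1.1 hs')
      simp only at hsg
      rcases Finset.mem_insert.mp he with he' | he'
      · simp only [Prod.mk.injEq] at he'; omega
      · rcases Finset.mem_insert.mp hw with hw' | hw'
        · simp only [Prod.mk.injEq] at hw'; omega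
        · exact absurd ⟨he', hw', hs'⟩ (hC.1.2 _ hpC)

lemma left_forced {m n : ℕ} (hm : 2 ≤ m) (hn : 2 ≤ n) {C : Finset (ℕ × ℕ)}
    (hC : MaximalConfig m n C) :
    (m - 1, 1) ∈ C ∨ ((m - 1, 2) ∈ C ∧ (m - 1, 3) ∈ C ∧ 3 ≤ n) := by
  by_cases h : (m - 1, 1) ∈ C
  · exact Or.inl h
  refine Or.inr ?_
  have hx : (m - 1, 1) ∈ Grid m n := by
    simp only [Grid, Finset.mem_product, Finset.mem_Icc]; omega
  obtain ⟨p, hp, he, hw, hs⟩ := exists_blocked hC hx h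
  obtain ⟨a, b⟩ := p
  rcases Finset.mem_insert.mp hp with heq | hpC
  · -- p = (m-1, 1); its west neighbour (m-1, 0) is impossible
    simp only [Prod.mk.injEq] at heq
    obtain ⟨rfl, rfl⟩ := heq
    rcases Finset.mem_insert.mp hw with h' | h'
    · simp [Prod.ext_iff] at h'
    · have := (mem_grid (hC.1.1 h')).2.2.1; omega
  · have hpg := mem_grid (hC.1.1 hpC)
    simp only at hpg
    rcases Finset.mem_insert.mp he with he' | he'
    · -- east of p = (m-1,1): b+1 = 1 impossible
      simp only [Prod.mk.injEq] at he'; omega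
    · rcases Finset.mem_insert.mp hw with hw' | hw'
      · -- west of p = (m-1,1): a = m-1, b = 2
        simp only [Prod.mk.injEq] at hw'
        have ha : a = m - 1 := hw'.1
        have hb : b = 2 := by omega
        subst ha; subst hb
        have he3 := mem_grid (hC.1.1 he')
        simp only at he3
        exact ⟨hpC, he', by omega⟩
      · rcases Finset.mem_insert.mp hs with hs' | hs'
        · -- south of p = (m-1,1): p = (m-2, 1); its west (m-2, 0) impossible
          simp only [Prod.mk.injEq] at hs'
          have hwg := mem_grid (hC.1.1 hw')
          simp only at hwg
          omega
        · exact absurd ⟨he', hw', hs'⟩ (hC.1.2 _ hpC)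

lemma right_forced {m n : ℕ} (hm : 2 ≤ m) (hn : 2 ≤ n) {C : Finset (ℕ × ℕ)}
    (hC : MaximalConfig m n C) :
    (m - 1, n) ∈ C ∨ ((m - 1, n - 1) ∈ C ∧ (m - 1, n - 2) ∈ C ∧ 3 ≤ n) := by
  by_cases h : (m - 1, n) ∈ C
  · exact Or.inl h
  refine Or.inr ?_
  have hx : (m - 1, n) ∈ Grid m n := by
    simp only [Grid, Finset.mem_product, Finset.mem_Icc]; omega
  obtain ⟨p, hp, he, hw, hs⟩ := exists_blocked hC hx h
  obtain ⟨a, b⟩ := p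
  rcases Finset.mem_insert.mp hp with heq | hpC
  · -- p = (m-1, n); its east neighbour (m-1, n+1) is impossible
    simp only [Prod.mk.injEq] at heq
    obtain ⟨rfl, rfl⟩ := heq
    rcases Finset.mem_insert.mp he with h' | h'
    · simp only [Prod.mk.injEq] at h'; omega
    · have := (mem_grid (hC.1.1 h')).2.2.2; omega
  · have hpg := mem_grid (hC.1.1 hpC)
    simp only at hpg
    rcases Finset.mem_insert.mp he with he' | he'
    · -- east of p = (m-1, n): a = m-1, b = n-1
      simp only [Prod.mk.injEq] at he'
      have ha : a = m - 1 := he'.1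
      have hb : b = n - 1 := by omega
      subst ha; subst hb
      rcases Finset.mem_insert.mp hw with hw' | hw'
      · simp only [Prod.mk.injEq] at hw'; omega
      · have hwg := mem_grid (hC.1.1 hw')
        simp only at hwg
        have : n - 1 - 1 = n - 2 := by omega
        rw [this] at hw'
        refine ⟨hpC, hw', by omega⟩
    · rcases Finset.mem_insert.mp hw with hw' | hw'
      · -- west of p = (m-1, n): b - 1 = n impossible since b ≤ n
        simp only [Prod.mk.injEq] at hw'; omega
      · rcases Finset.mem_insert.mp hs with hs' | hs'
        · -- south of p = (m-1, n): p = (m-2, n); its east (m-2, n+1) impossible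
          simp only [Prod.mk.injEq] at hs'
          have heg := mem_grid (hC.1.1 he')
          simp only at heg
          omega
        · exact absurd ⟨he', hw', hs'⟩ (hC.1.2 _ hpC)
/-- Any maximal configuration on the m×n grid (m,n ≥ 2) has at least n+2
occupied lots in the two southernmost rows m-1 and m. -/
theorem two_southern_rows (m n : ℕ) (hm : 2 ≤ m) (hn : 2 ≤ n)
    (C : Finset (ℕ × ℕ)) (hC : MaximalConfig m n C) :
    n + 2 ≤ (C ∩ (({m - 1, m} : Finset ℕ) ×ˢ Finset.Icc 1 n)).card := by
  classical
  set A := (Finset.Icc 1 n).filter (fun j => (m, j) ∈ C) with hA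
  set B := (Finset.Icc 1 n).filter (fun j => (m - 1, j) ∈ C) with hB
  have hBmem : ∀ j : ℕ, (m - 1, j) ∈ C → j ∈ B := by
    intro j h
    have hg := mem_grid (hC.1.1 h)
    simp only at hg
    simp only [hB, Finset.mem_filter, Finset.mem_Icc]
    exact ⟨⟨hg.2.2.1, hg.2.2.2⟩, h⟩
  have hinj1 : Function.Injective (fun j : ℕ => ((m - 1, j) : ℕ × ℕ)) := by
    intro a b h; simpa using h
  have hinj2 : Function.Injective (fun j : ℕ => ((m, j) : ℕ × ℕ)) := by
    intro a b h; simpa using h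
  have hset : C ∩ (({m - 1, m} : Finset ℕ) ×ˢ Finset.Icc 1 n) =
      B.image (fun j => (m - 1, j)) ∪ A.image (fun j => (m, j)) := by
    ext ⟨i, j⟩
    simp only [Finset.mem_inter, Finset.mem_product, Finset.mem_insert, Finset.mem_singleton,
      Finset.mem_union, Finset.mem_image, hA, hB, Finset.mem_filter, Finset.mem_Icc,
      Prod.mk.injEq]
    constructor
    · rintro ⟨hc, hi | hi, hj⟩
      · exact Or.inl ⟨j, ⟨hj, hi ▸ hc⟩, hi.symm, rfl⟩
      · exact Or.inr ⟨j, ⟨hj, hi ▸ hc⟩, hi.symm, rfl⟩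
    · rintro (⟨k, ⟨hk, hc⟩, hi, hj⟩ | ⟨k, ⟨hk, hc⟩, hi, hj⟩)
      · subst hi; subst hj; exact ⟨hc, Or.inl rfl, hk⟩
      · subst hi; subst hj; exact ⟨hc, Or.inr rfl, hk⟩
  have hdisj : Disjoint (B.image fun j => ((m - 1, j) : ℕ × ℕ))
      (A.image fun j => ((m, j) : ℕ × ℕ)) := by
    simp only [Finset.disjoint_left, Finset.mem_image]
    rintro p ⟨a, _, rfl⟩ ⟨b, _, hb2⟩
    simp only [Prod.mk.injEq] at hb2
    omega
  have hcard : (C ∩ (({m - 1, m} : Finset ℕ) ×ˢ Finset.Icc 1 n)).card = B.card + A.card := by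
    rw [hset, Finset.card_union_of_disjoint hdisj, Finset.card_image_of_injective _ hinj1,
      Finset.card_image_of_injective _ hinj2]
  rw [hcard]
  by_cases hall : ∀ j ∈ Finset.Icc 1 n, (m, j) ∈ C
  · have hAcard : A.card = n := by
      rw [hA, Finset.filter_true_of_mem hall, Nat.card_Icc]; omega
    have hBcard : 2 ≤ B.card := by
      have two_mem : ∀ a b : ℕ, a ∈ B → b ∈ B → a ≠ b → 2 ≤ B.card := by
        intro a b ha hb hab
        exact Finset.one_lt_card_iff.mpr ⟨a, b, ha, hb, hab⟩
      rcases left_forced hm hn hC with h1 | ⟨h2, h3, _⟩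
      · rcases right_forced hm hn hC with h4 | ⟨h5, h6, h7⟩
        · exact two_mem 1 n (hBmem _ h1) (hBmem _ h4) (by omega)
        · exact two_mem (n - 1) (n - 2) (hBmem _ h5) (hBmem _ h6) (by omega)
      · exact two_mem 2 3 (hBmem _ h2) (hBmem _ h3) (by omega)
    omega
  · push_neg at hall
    set Z := (Finset.Icc 1 n).filter (fun j => (m, j) ∉ C) with hZ
    have hZne : Z.Nonempty := by
      obtain ⟨j, hj, hjC⟩ := hall
      exact ⟨j, Finset.mem_filter.mpr ⟨hj, hjC⟩⟩
    have hfact : ∀ j ∈ Z, 2 ≤ j ∧ j + 1 ≤ n ∧ (j - 1) ∈ B ∧ j ∈ B ∧ (j + 1) ∈ B := by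
      intro j hj
      obtain ⟨hj', hjC⟩ := Finset.mem_filter.mp hj
      obtain ⟨h1, h2⟩ := Finset.mem_Icc.mp hj'
      obtain ⟨c1, c2, c3, c4, c5⟩ := south_forced hm hC h1 h2 hjC
      exact ⟨c4, c5, hBmem _ c1, hBmem _ c2, hBmem _ c3⟩
    set j0 := Z.min' hZne with hj0def
    set j1 := Z.max' hZne with hj1def
    have hj0 := hfact j0 (Z.min'_mem hZne)
    have hj1 := hfact j1 (Z.max'_mem hZne)
    have h2j0 : 2 ≤ j0 := hj0.1
    have hj01 : j0 ≤ j1 := Z.min'_le j1 (Z.max'_mem hZne)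
    have hn1 : j1 + 1 ∉ Z := by
      intro h
      have := Z.le_max' _ h
      omega
    have hn0 : j0 - 1 ∉ insert (j1 + 1) Z := by
      simp only [Finset.mem_insert]
      rintro (h | h)
      · omega
      · have := Z.min'_le _ h; omega
    have hsub : insert (j0 - 1) (insert (j1 + 1) Z) ⊆ B := by
      intro k hk
      simp only [Finset.mem_insert] at hk
      rcases hk with rfl | rfl | hk
      · exact hj0.2.2.1
      · exact hj1.2.2.2.2
      · exact (hfact k hk).2.2.2.1
    have hle := Finset.card_le_card hsub
    rw [Finset.card_insert_of_notMem hn0, Finset.card_insert_of_notMem hn1] at hle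
    have hZA : A.card + Z.card = n := by
      have h := Finset.card_filter_add_card_filter_not
        (s := Finset.Icc 1 n) (p := fun j => (m, j) ∈ C)
      rw [Nat.card_Icc] at h
      simpa [hA, hZ] using h
    omega
end

section
/- Let C be any maximal configuration on the m×n grid with m,n ≥ 2, and let 1 ≤ l ≤ m. Then the restriction of C to the two westernmost columns of the top l rows contains at least l occupied lots, i.e. |C ∩ ({1,…,l}×{1,2})| ≥ l; and likewise for the two easternmost columns, |C ∩ ({1,…,l}×{n-1,n})| ≥ l. -/
lemma mem_grid_iff {m n : ℕ} {p : ℕ × ℕ} :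
    p ∈ Grid m n ↔ (1 ≤ p.1 ∧ p.1 ≤ m) ∧ (1 ≤ p.2 ∧ p.2 ≤ n) := by
  simp [Grid, Finset.mem_product, Finset.mem_Icc]

/-- In a maximal configuration, every row meets the two westernmost columns. -/
lemma west_row (m n : ℕ) (hn : 2 ≤ n) (C : Finset (ℕ × ℕ))
    (hC : MaximalConfig m n C) (i : ℕ) (hi1 : 1 ≤ i) (him : i ≤ m) :
    (i, 1) ∈ C ∨ (i, 2) ∈ C := by
  by_contra h
  push_neg at h
  obtain ⟨h1, h2⟩ := h
  obtain ⟨⟨hsub, hblk⟩, hmax⟩ := hC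
  set D := insert ((i, 1) : ℕ × ℕ) C with hD
  have hDperm : Permissible m n D := by
    constructor
    · intro p hp
      rcases Finset.mem_insert.mp hp with rfl | hp
      · exact mem_grid_iff.mpr ⟨⟨hi1, him⟩, le_refl 1, by omega⟩
      · exact hsub hp
    · intro p hp hb
      obtain ⟨hE, hW, hS⟩ := hb
      have colpos : ∀ q ∈ D, 1 ≤ q.2 := by
        intro q hq
        rcases Finset.mem_insert.mp hq with rfl | hq
        · exact le_refl 1
        · exact (mem_grid_iff.mp (hsub hq)).2.1
      rcases Finset.mem_insert.mp hp with rfl | hp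
      · -- p = (i,1): its west neighbour (i,0) can't be in D
        have := colpos _ hW
        simp at this
      · -- p ∈ C
        have hE' : (p.1, p.2 + 1) ∈ C := by
          rcases Finset.mem_insert.mp hE with he | he
          · -- p.2 + 1 = 1 impossible since p.2 ≥ 1
            have hp2 : 1 ≤ p.2 := (mem_grid_iff.mp (hsub hp)).2.1
            have : p.2 + 1 = 1 := congrArg Prod.snd he
            omega
          · exact he
        have hW' : (p.1, p.2 - 1) ∈ C := by
          rcases Finset.mem_insert.mp hW with hw | hw
          · -- then p = (i, 2), contradicting h2
            have hp2 : 1 ≤ p.2 := (mem_grid_iff.mp (hsub hp)).2.1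
            have e1 : p.1 = i := congrArg Prod.fst hw
            have e2 : p.2 - 1 = 1 := congrArg Prod.snd hw
            have : p = (i, 2) := by
              ext <;> simp [e1] <;> omega
            exact absurd (this ▸ hp) h2
          · exact hw
        have hS' : (p.1 + 1, p.2) ∈ C := by
          rcases Finset.mem_insert.mp hS with hs | hs
          · -- then p = (i-1, 1), and its west neighbour (p.1, 0) ∈ D, impossible
            have e2 : p.2 = 1 := congrArg Prod.snd hs
            have := colpos _ hW
            simp [e2] at this
          · exact hs
        exact hblk p hp ⟨hE', hW', hS'⟩
  have := hmax D hDperm (Finset.subset_insert _ _)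
  have : (i, 1) ∈ C := this ▸ Finset.mem_insert_self _ _
  exact h1 this

/-- In a maximal configuration, every row meets the two easternmost columns. -/
lemma east_row (m n : ℕ) (hn : 2 ≤ n) (C : Finset (ℕ × ℕ))
    (hC : MaximalConfig m n C) (i : ℕ) (hi1 : 1 ≤ i) (him : i ≤ m) :
    (i, n - 1) ∈ C ∨ (i, n) ∈ C := by
  by_contra h
  push_neg at h
  obtain ⟨h1, h2⟩ := h
  obtain ⟨⟨hsub, hblk⟩, hmax⟩ := hC
  set D := insert ((i, n) : ℕ × ℕ) C with hD
  have collen : ∀ q ∈ D, q.2 ≤ n := by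
    intro q hq
    rcases Finset.mem_insert.mp hq with rfl | hq
    · exact le_refl n
    · exact (mem_grid_iff.mp (hsub hq)).2.2
  have hDperm : Permissible m n D := by
    constructor
    · intro p hp
      rcases Finset.mem_insert.mp hp with rfl | hp
      · exact mem_grid_iff.mpr ⟨⟨hi1, him⟩, by omega, le_refl n⟩
      · exact hsub hp
    · intro p hp hb
      obtain ⟨hE, hW, hS⟩ := hb
      rcases Finset.mem_insert.mp hp with rfl | hp
      · -- p = (i,n): its east neighbour (i,n+1) can't be in D
        have := collen _ hE
        simp at this
      · have hp2 : 1 ≤ p.2 ∧ p.2 ≤ n := (mem_grid_iff.mp (hsub hp)).2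
        have hE' : (p.1, p.2 + 1) ∈ C := by
          rcases Finset.mem_insert.mp hE with he | he
          · -- then p = (i, n-1), contradicting h1
            have e1 : p.1 = i := congrArg Prod.fst he
            have e2 : p.2 + 1 = n := congrArg Prod.snd he
            have : p = (i, n - 1) := by
              ext <;> simp [e1] <;> omega
            exact absurd (this ▸ hp) h1
          · exact he
        have hW' : (p.1, p.2 - 1) ∈ C := by
          rcases Finset.mem_insert.mp hW with hw | hw
          · have e2 : p.2 - 1 = n := congrArg Prod.snd hw
            omega
          · exact hw
        have hS' : (p.1 + 1, p.2) ∈ C := by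
          rcases Finset.mem_insert.mp hS with hs | hs
          · -- then p = (i-1, n), and its east neighbour (p.1, n+1) ∈ D, impossible
            have e2 : p.2 = n := congrArg Prod.snd hs
            have := collen _ hE
            simp [e2] at this
          · exact hs
        exact hblk p hp ⟨hE', hW', hS'⟩
  have := hmax D hDperm (Finset.subset_insert _ _)
  have : (i, n) ∈ C := this ▸ Finset.mem_insert_self _ _
  exact h2 this

lemma card_bound (l : ℕ) (C : Finset (ℕ × ℕ)) (cols : Finset ℕ)
    (h : ∀ i, 1 ≤ i → i ≤ l → ∃ c ∈ cols, (i, c) ∈ C) :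
    l ≤ (C ∩ (Finset.Icc 1 l ×ˢ cols)).card := by
  have hsub : Finset.Icc 1 l ⊆ (C ∩ (Finset.Icc 1 l ×ˢ cols)).image Prod.fst := by
    intro i hi
    rw [Finset.mem_Icc] at hi
    obtain ⟨c, hc, hic⟩ := h i hi.1 hi.2
    refine Finset.mem_image.mpr ⟨(i, c), ?_, rfl⟩
    simp [Finset.mem_inter, Finset.mem_product, Finset.mem_Icc, hic, hc, hi.1, hi.2]
  calc l = (Finset.Icc 1 l).card := by simp
    _ ≤ _ := Finset.card_le_card hsub
    _ ≤ _ := Finset.card_image_le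

/-- For any maximal configuration on the m×n grid (m,n ≥ 2) and any 1 ≤ l ≤ m,
the restriction to the two westernmost (resp. easternmost) columns of the top l
rows contains at least l occupied lots. -/
theorem border_two_columns (m n : ℕ) (hm : 2 ≤ m) (hn : 2 ≤ n)
    (C : Finset (ℕ × ℕ)) (hC : MaximalConfig m n C)
    (l : ℕ) (hl1 : 1 ≤ l) (hlm : l ≤ m) :
    l ≤ (C ∩ (Finset.Icc 1 l ×ˢ ({1, 2} : Finset ℕ))).card ∧
    l ≤ (C ∩ (Finset.Icc 1 l ×ˢ ({n - 1, n} : Finset ℕ))).card := by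
  constructor
  · apply card_bound
    intro i hi1 hil
    rcases west_row m n hn C hC i hi1 (le_trans hil hlm) with h | h
    · exact ⟨1, by simp, h⟩
    · exact ⟨2, by simp, h⟩
  · apply card_bound
    intro i hi1 hil
    rcases east_row m n hn C hC i hi1 (le_trans hil hlm) with h | h
    · exact ⟨n - 1, by simp, h⟩
    · exact ⟨n, by simp, h⟩
end

section
/- Let C be any maximal configuration on the m×n grid with m ≥ 2, n ≥ 3, and let 1 ≤ l ≤ m. Then the restriction of C to the three westernmost columns of the top l rows contains at least 2l occupied lots, i.e. |C ∩ ({1,…,l}×{1,2,3})| ≥ 2l; and likewise for the three easternmost columns, |C ∩ ({1,…,l}×{n-2,n-1,n})| ≥ 2l. -/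
namespace BP
variable {m n : ℕ} {C : Finset (ℕ × ℕ)}

lemma gridBounds (hC : C ⊆ Grid m n) {a b : ℕ} (hp : (a, b) ∈ C) :
    1 ≤ a ∧ a ≤ m ∧ 1 ≤ b ∧ b ≤ n := by
  have := hC hp
  simpa [Grid, Finset.mem_product, Finset.mem_Icc, and_assoc] using this

lemma memGrid {i j : ℕ} (h1 : 1 ≤ i) (h2 : i ≤ m) (h3 : 1 ≤ j) (h4 : j ≤ n) :
    (i, j) ∈ Grid m n := by
  simp only [Grid, Finset.mem_product, Finset.mem_Icc]; omega

lemma exists_blocked (hC : MaximalConfig m n C) {p : ℕ × ℕ}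
    (hp : p ∈ Grid m n) (hpC : p ∉ C) :
    ∃ q ∈ insert p C, Blocked (insert p C) q := by
  by_contra h
  push_neg at h
  have hperm : Permissible m n (insert p C) :=
    ⟨Finset.insert_subset hp hC.1.1, h⟩
  have := hC.2 _ hperm (Finset.subset_insert _ _)
  exact hpC (this ▸ Finset.mem_insert_self p C)

/-- Each row is occupied in column 1 or column 2. -/
lemma w12 (hn : 3 ≤ n) (hC : MaximalConfig m n C) {i : ℕ} (h1 : 1 ≤ i) (h2 : i ≤ m) :
    (i, 1) ∈ C ∨ (i, 2) ∈ C := by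
  by_contra hcon
  push_neg at hcon
  obtain ⟨hA, hB⟩ := hcon
  have hsub := hC.1.1
  obtain ⟨q, hq, hqA, hqB, hqS⟩ := exists_blocked hC (memGrid h1 h2 le_rfl (by omega)) hA
  obtain ⟨a, b⟩ := q
  simp only [Finset.mem_insert, Prod.mk.injEq] at hq hqA hqB hqS
  rcases hq with ⟨rfl, rfl⟩ | hq
  · -- q = (i,1): its west neighbour (i,0) must be in insert p C
    rcases hqB with ⟨_, h⟩ | h
    · omega
    · exact absurd (gridBounds hsub h) (by omega)
  · have hnb := hC.1.2 _ hq
    have hb1 := gridBounds hsub hq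
    rcases hqA with ⟨rfl, hA1⟩ | hqA
    · omega
    rcases hqB with ⟨rfl, hB1⟩ | hqB
    · have : b = 2 := by omega
      subst this; exact hB hq
    rcases hqS with ⟨hS1, rfl⟩ | hqS
    · exact absurd (gridBounds hsub hqB) (by omega)
    · exact hnb ⟨hqA, hqB, hqS⟩

/-- Each row is occupied in column 1 or column 3. -/
lemma w13 (hn : 3 ≤ n) (hC : MaximalConfig m n C) {i : ℕ} (h1 : 1 ≤ i) (h2 : i ≤ m) :
    (i, 1) ∈ C ∨ (i, 3) ∈ C := by
  by_contra hcon
  push_neg at hcon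
  obtain ⟨hA, hB⟩ := hcon
  have hsub := hC.1.1
  obtain ⟨q, hq, hqA, hqB, hqS⟩ := exists_blocked hC (memGrid h1 h2 le_rfl (by omega)) hA
  obtain ⟨a, b⟩ := q
  simp only [Finset.mem_insert, Prod.mk.injEq] at hq hqA hqB hqS
  rcases hq with ⟨rfl, rfl⟩ | hq
  · rcases hqB with ⟨_, h⟩ | h
    · omega
    · exact absurd (gridBounds hsub h) (by omega)
  · have hnb := hC.1.2 _ hq
    have hb1 := gridBounds hsub hq
    rcases hqA with ⟨rfl, hA1⟩ | hqA
    · omega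
    rcases hqB with ⟨rfl, hB1⟩ | hqB
    · -- q = (i,2); its east neighbour (i,3) ∈ insert (i,1) C
      have hb2 : b = 2 := by omega
      subst hb2
      exact hB hqA
    rcases hqS with ⟨hS1, rfl⟩ | hqS
    · exact absurd (gridBounds hsub hqB) (by omega)
    · exact hnb ⟨hqA, hqB, hqS⟩

/-- If a row is empty in columns 2 and 3, the previous row is full in columns 1,2,3. -/
lemma wdef (hn : 3 ≤ n) (hC : MaximalConfig m n C) {i : ℕ} (h1 : 1 ≤ i) (h2 : i ≤ m)
    (hA2 : (i, 2) ∉ C) (hA3 : (i, 3) ∉ C) :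
    2 ≤ i ∧ (i - 1, 1) ∈ C ∧ (i - 1, 2) ∈ C ∧ (i - 1, 3) ∈ C := by
  have hsub := hC.1.1
  obtain ⟨q, hq, hqA, hqB, hqS⟩ := exists_blocked hC (memGrid h1 h2 (by omega) (by omega)) hA2
  obtain ⟨a, b⟩ := q
  simp only [Finset.mem_insert, Prod.mk.injEq] at hq hqA hqB hqS
  rcases hq with ⟨rfl, rfl⟩ | hq
  · -- q = (i,2): its east neighbour (i,3)
    rcases hqA with ⟨_, h⟩ | h
    · omega
    · exact absurd h hA3
  · have hnb := hC.1.2 _ hq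
    have hb1 := gridBounds hsub hq
    rcases hqA with ⟨rfl, hA1⟩ | hqA
    · -- q = (i,1): its west neighbour (i,0)
      have hb2 : b = 1 := by omega
      subst hb2
      rcases hqB with ⟨_, h⟩ | h
      · omega
      · exact absurd (gridBounds hsub h) (by omega)
    rcases hqB with ⟨rfl, hB1⟩ | hqB
    · have hb2 : b = 3 := by omega
      subst hb2; exact absurd hq hA3
    rcases hqS with ⟨hS1, rfl⟩ | hqS
    · -- q = (i-1, 2), a + 1 = i
      refine ⟨by omega, ?_, ?_, ?_⟩
      · have : i - 1 = a := by omega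
        rw [this]; exact hqB
      · have : i - 1 = a := by omega
        rw [this]; exact hq
      · have : i - 1 = a := by omega
        rw [this]; exact hqA
    · exact absurd ⟨hqA, hqB, hqS⟩ hnb

/-- Each row is occupied in column n or column n-1. -/
lemma e21 {j : ℕ} (hn : n = j + 2) (hj : 1 ≤ j) (hC : MaximalConfig m n C)
    {i : ℕ} (h1 : 1 ≤ i) (h2 : i ≤ m) :
    (i, j + 2) ∈ C ∨ (i, j + 1) ∈ C := by
  by_contra hcon
  push_neg at hcon
  obtain ⟨hA, hB⟩ := hcon
  have hsub := hC.1.1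
  obtain ⟨q, hq, hqA, hqB, hqS⟩ :=
    exists_blocked hC (memGrid h1 h2 (by omega) (by omega)) hA
  obtain ⟨a, b⟩ := q
  simp only [Finset.mem_insert, Prod.mk.injEq] at hq hqA hqB hqS
  rcases hq with ⟨rfl, rfl⟩ | hq
  · -- q = (i, j+2): its east neighbour (i, j+3)
    rcases hqA with ⟨_, h⟩ | h
    · omega
    · exact absurd (gridBounds hsub h) (by omega)
  · have hnb := hC.1.2 _ hq
    have hb1 := gridBounds hsub hq
    rcases hqA with ⟨rfl, hA1⟩ | hqA
    · have hb2 : b = j + 1 := by omega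
      subst hb2; exact hB hq
    rcases hqB with ⟨rfl, hB1⟩ | hqB
    · have hb2 : b = j + 3 := by omega
      omega
    rcases hqS with ⟨hS1, rfl⟩ | hqS
    · -- q = (i-1, j+2): its east neighbour (a, j+3)
      exact absurd (gridBounds hsub hqA) (by omega)
    · exact hnb ⟨hqA, hqB, hqS⟩

/-- Each row is occupied in column n or column n-2. -/
lemma e20 {j : ℕ} (hn : n = j + 2) (hj : 1 ≤ j) (hC : MaximalConfig m n C)
    {i : ℕ} (h1 : 1 ≤ i) (h2 : i ≤ m) :
    (i, j + 2) ∈ C ∨ (i, j) ∈ C := by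
  by_contra hcon
  push_neg at hcon
  obtain ⟨hA, hB⟩ := hcon
  have hsub := hC.1.1
  obtain ⟨q, hq, hqA, hqB, hqS⟩ :=
    exists_blocked hC (memGrid h1 h2 (by omega) (by omega)) hA
  obtain ⟨a, b⟩ := q
  simp only [Finset.mem_insert, Prod.mk.injEq] at hq hqA hqB hqS
  rcases hq with ⟨rfl, rfl⟩ | hq
  · rcases hqA with ⟨_, h⟩ | h
    · omega
    · exact absurd (gridBounds hsub h) (by omega)
  · have hnb := hC.1.2 _ hq
    have hb1 := gridBounds hsub hq
    rcases hqA with ⟨rfl, hA1⟩ | hqA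
    · -- q = (i, j+1): its west neighbour (i, j)
      have hb2 : b = j + 1 := by omega
      subst hb2
      rcases hqB with ⟨_, h⟩ | h
      · omega
      · have : j + 1 - 1 = j := by omega
        rw [this] at h
        exact hB h
    rcases hqB with ⟨rfl, hB1⟩ | hqB
    · omega
    rcases hqS with ⟨hS1, rfl⟩ | hqS
    · exact absurd (gridBounds hsub hqA) (by omega)
    · exact hnb ⟨hqA, hqB, hqS⟩

/-- If a row is empty in columns n-1 and n-2, the previous row is full
in columns n-2, n-1, n. -/
lemma edef {j : ℕ} (hn : n = j + 2) (hj : 1 ≤ j) (hC : MaximalConfig m n C)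
    {i : ℕ} (h1 : 1 ≤ i) (h2 : i ≤ m)
    (hA1 : (i, j + 1) ∉ C) (hA0 : (i, j) ∉ C) :
    2 ≤ i ∧ (i - 1, j) ∈ C ∧ (i - 1, j + 1) ∈ C ∧ (i - 1, j + 2) ∈ C := by
  have hsub := hC.1.1
  obtain ⟨q, hq, hqA, hqB, hqS⟩ :=
    exists_blocked hC (memGrid h1 h2 (by omega) (by omega)) hA1
  obtain ⟨a, b⟩ := q
  simp only [Finset.mem_insert, Prod.mk.injEq] at hq hqA hqB hqS
  rcases hq with ⟨rfl, rfl⟩ | hq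
  · -- q = (i, j+1): its west neighbour (i, j)
    rcases hqB with ⟨_, h⟩ | h
    · omega
    · have : j + 1 - 1 = j := by omega
      rw [this] at h
      exact absurd h hA0
  · have hnb := hC.1.2 _ hq
    have hb1 := gridBounds hsub hq
    rcases hqA with ⟨rfl, hA'⟩ | hqA
    · have hb2 : b = j := by omega
      subst hb2; exact absurd hq hA0
    rcases hqB with ⟨rfl, hB'⟩ | hqB
    · -- q = (i, j+2): its east neighbour (i, j+3)
      have hb2 : b = j + 2 := by omega
      subst hb2
      exact absurd (gridBounds hsub hqA) (by omega)
    rcases hqS with ⟨hS1, rfl⟩ | hqS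
    · -- q = (i-1, j+1)
      have e : j + 1 - 1 = j := by omega
      rw [e] at hqB
      have ei : i - 1 = a := by omega
      rw [ei]
      exact ⟨by omega, hqB, hq, hqA⟩
    · exact absurd ⟨hqA, hqB, hqS⟩ hnb

lemma card_step (C : Finset (ℕ × ℕ)) (cols : Finset ℕ) (k : ℕ) :
    (C ∩ (Finset.Icc 1 (k + 1) ×ˢ cols)).card
      = (C ∩ (Finset.Icc 1 k ×ˢ cols)).card + (C ∩ ({k + 1} ×ˢ cols)).card := by
  rw [← Finset.card_union_of_disjoint]
  · congr 1
    ext ⟨a, b⟩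
    simp only [Finset.mem_inter, Finset.mem_union, Finset.mem_product,
      Finset.mem_Icc, Finset.mem_singleton]
    constructor
    · rintro ⟨hc, ⟨ha1, ha2⟩, hb⟩
      rcases Nat.lt_or_ge a (k + 1) with h | h
      · exact Or.inl ⟨hc, ⟨ha1, by omega⟩, hb⟩
      · exact Or.inr ⟨hc, by omega, hb⟩
    · rintro (⟨hc, ⟨ha1, ha2⟩, hb⟩ | ⟨hc, rfl, hb⟩)
      · exact ⟨hc, ⟨ha1, by omega⟩, hb⟩
      · exact ⟨hc, ⟨by omega, le_rfl⟩, hb⟩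
  · rw [Finset.disjoint_left]
    rintro ⟨a, b⟩ h1 h2
    simp only [Finset.mem_inter, Finset.mem_product, Finset.mem_Icc,
      Finset.mem_singleton] at h1 h2
    omega

lemma row_one {C : Finset (ℕ × ℕ)} {i c : ℕ} {cols : Finset ℕ}
    (hc : c ∈ cols) (h : (i, c) ∈ C) :
    1 ≤ (C ∩ ({i} ×ˢ cols)).card :=
  Finset.card_pos.2 ⟨(i, c), Finset.mem_inter.2 ⟨h, by simp [hc]⟩⟩

lemma row_two {C : Finset (ℕ × ℕ)} {i c c' : ℕ} {cols : Finset ℕ}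
    (hc : c ∈ cols) (hc' : c' ∈ cols) (hne : c ≠ c')
    (h : (i, c) ∈ C) (h' : (i, c') ∈ C) :
    2 ≤ (C ∩ ({i} ×ˢ cols)).card :=
  Finset.one_lt_card.2 ⟨(i, c), Finset.mem_inter.2 ⟨h, by simp [hc]⟩,
    (i, c'), Finset.mem_inter.2 ⟨h', by simp [hc']⟩, by simp [hne]⟩

lemma row_three {C : Finset (ℕ × ℕ)} {i c c' c'' : ℕ} {cols : Finset ℕ}
    (hc : c ∈ cols) (hc' : c' ∈ cols) (hc'' : c'' ∈ cols)
    (h1 : c ≠ c') (h2 : c ≠ c'') (h3 : c' ≠ c'')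
    (h : (i, c) ∈ C) (h' : (i, c') ∈ C) (h'' : (i, c'') ∈ C) :
    3 ≤ (C ∩ ({i} ×ˢ cols)).card :=
  Finset.two_lt_card.2 ⟨(i, c), Finset.mem_inter.2 ⟨h, by simp [hc]⟩,
    (i, c'), Finset.mem_inter.2 ⟨h', by simp [hc']⟩,
    (i, c''), Finset.mem_inter.2 ⟨h'', by simp [hc'']⟩,
    by simp [h1], by simp [h2], by simp [h3]⟩

lemma base_zero (C : Finset (ℕ × ℕ)) (cols : Finset ℕ) :
    (C ∩ (Finset.Icc 1 0 ×ˢ cols)).card = 0 := by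
  simp
lemma main_west {m n : ℕ} {C : Finset (ℕ × ℕ)} (hn : 3 ≤ n)
    (hC : MaximalConfig m n C) :
    ∀ l, l ≤ m → 2 * l ≤ (C ∩ (Finset.Icc 1 l ×ˢ ({1, 2, 3} : Finset ℕ))).card := by
  intro l
  induction l using Nat.strong_induction_on with
  | _ l ih =>
    intro hlm
    match l with
    | 0 => simp [base_zero]
    | k + 1 =>
      rw [card_step]
      by_cases hdef : (k + 1, 2) ∉ C ∧ (k + 1, 3) ∉ C
      · obtain ⟨hk2, hf1, hf2, hf3⟩ :=
          wdef hn hC (by omega) hlm hdef.1 hdef.2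
        match k, hk2, hf1, hf2, hf3 with
        | k' + 1, _, hf1, hf2, hf3 =>
          rw [card_step]
          have e : k' + 1 + 1 - 1 = k' + 1 := rfl
          rw [e] at hf1 hf2 hf3
          have h3 : 3 ≤ (C ∩ ({k' + 1} ×ˢ ({1, 2, 3} : Finset ℕ))).card :=
            row_three (by simp) (by simp) (by simp)
              (by omega) (by omega) (by omega) hf1 hf2 hf3
          have h1c : (k' + 1 + 1, 1) ∈ C := by
            rcases w12 hn hC (by omega) hlm with h | h
            · exact h
            · exact absurd h hdef.1
          have h1 : 1 ≤ (C ∩ ({k' + 1 + 1} ×ˢ ({1, 2, 3} : Finset ℕ))).card :=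
            row_one (by simp) h1c
          have hih := ih k' (by omega) (by omega)
          omega
      · push_neg at hdef
        have h2 : 2 ≤ (C ∩ ({k + 1} ×ˢ ({1, 2, 3} : Finset ℕ))).card := by
          by_cases h2c : (k + 1, 2) ∈ C
          · rcases w13 hn hC (by omega) hlm with h | h
            · exact row_two (by simp) (by simp) (by omega) h h2c
            · exact row_two (by simp) (by simp) (by omega) h2c h
          · have h3c := hdef h2c
            rcases w12 hn hC (by omega) hlm with h | h
            · exact row_two (by simp) (by simp) (by omega) h h3c
            · exact absurd h h2c
        have hih := ih k (by omega) (by omega)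
        omega

lemma main_east {m n j : ℕ} {C : Finset (ℕ × ℕ)} (hn : n = j + 2) (hj : 1 ≤ j)
    (hC : MaximalConfig m n C) :
    ∀ l, l ≤ m →
      2 * l ≤ (C ∩ (Finset.Icc 1 l ×ˢ ({j, j + 1, j + 2} : Finset ℕ))).card := by
  intro l
  induction l using Nat.strong_induction_on with
  | _ l ih =>
    intro hlm
    match l with
    | 0 => simp [base_zero]
    | k + 1 =>
      rw [card_step]
      by_cases hdef : (k + 1, j + 1) ∉ C ∧ (k + 1, j) ∉ C
      · obtain ⟨hk2, hf1, hf2, hf3⟩ :=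
          edef hn hj hC (by omega) hlm hdef.1 hdef.2
        match k, hk2, hf1, hf2, hf3 with
        | k' + 1, _, hf1, hf2, hf3 =>
          rw [card_step]
          have e : k' + 1 + 1 - 1 = k' + 1 := rfl
          rw [e] at hf1 hf2 hf3
          have h3 : 3 ≤ (C ∩ ({k' + 1} ×ˢ ({j, j + 1, j + 2} : Finset ℕ))).card :=
            row_three (by simp) (by simp) (by simp)
              (by omega) (by omega) (by omega) hf1 hf2 hf3
          have h1c : (k' + 1 + 1, j + 2) ∈ C := by
            rcases e21 hn hj hC (by omega) hlm with h | h
            · exact h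
            · exact absurd h hdef.1
          have h1 : 1 ≤ (C ∩ ({k' + 1 + 1} ×ˢ ({j, j + 1, j + 2} : Finset ℕ))).card :=
            row_one (by simp) h1c
          have hih := ih k' (by omega) (by omega)
          omega
      · push_neg at hdef
        have h2 : 2 ≤ (C ∩ ({k + 1} ×ˢ ({j, j + 1, j + 2} : Finset ℕ))).card := by
          by_cases h1c : (k + 1, j + 1) ∈ C
          · rcases e20 hn hj hC (by omega) hlm with h | h
            · exact row_two (by simp) (by simp) (by omega) h h1c
            · exact row_two (by simp) (by simp) (by omega) h h1c
          · have h0c := hdef h1c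
            rcases e21 hn hj hC (by omega) hlm with h | h
            · exact row_two (by simp) (by simp) (by omega) h h0c
            · exact absurd h h1c
        have hih := ih k (by omega) (by omega)
        omega

end BP

/-- For any maximal configuration on the m×n grid (m ≥ 2, n ≥ 3) and any
1 ≤ l ≤ m, the restriction to the three westernmost (resp. easternmost)
columns of the top l rows contains at least 2l occupied lots. -/
theorem border_three_columns (m n : ℕ) (hm : 2 ≤ m) (hn : 3 ≤ n)
    (C : Finset (ℕ × ℕ)) (hC : MaximalConfig m n C)
    (l : ℕ) (hl1 : 1 ≤ l) (hlm : l ≤ m) :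
    2 * l ≤ (C ∩ (Finset.Icc 1 l ×ˢ ({1, 2, 3} : Finset ℕ))).card ∧
    2 * l ≤ (C ∩ (Finset.Icc 1 l ×ˢ ({n - 2, n - 1, n} : Finset ℕ))).card := by
  constructor
  · exact BP.main_west hn hC l hlm
  · obtain ⟨j, rfl⟩ : ∃ j, n = j + 2 := ⟨n - 2, by omega⟩
    have e : ({j + 2 - 2, j + 2 - 1, j + 2} : Finset ℕ) = {j, j + 1, j + 2} := by
      norm_num
    rw [e]
    exact BP.main_east rfl (by omega) hC l hlm
end

section
/- Let C be any maximal configuration on the m×n grid with m ≥ 2, n ≥ 4, and let 1 ≤ l ≤ m and 1 ≤ t ≤ n-3. Then the restriction of C to the four consecutive columns t, t+1, t+2, t+3 of the top l rows contains at least 2l occupied lots, i.e. |C ∩ ({1,…,l}×{t,t+1,t+2,t+3})| ≥ 2l. -/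
/-- indicator of occupancy -/
def bb (C : Finset (ℕ × ℕ)) (i j : ℕ) : ℕ := if (i, j) ∈ C then 1 else 0

/-- number of occupied cells in row i, columns t..t+3 -/
def ff (C : Finset (ℕ × ℕ)) (t i : ℕ) : ℕ :=
  bb C i t + bb C i (t+1) + bb C i (t+2) + bb C i (t+3)

lemma bb_one {C : Finset (ℕ × ℕ)} {i j : ℕ} (h : (i, j) ∈ C) : bb C i j = 1 :=
  if_pos h

lemma grid_bounds {m n : ℕ} {C : Finset (ℕ × ℕ)} (hG : C ⊆ Grid m n)
    {r c : ℕ} (h : (r, c) ∈ C) : 1 ≤ r ∧ r ≤ m ∧ 1 ≤ c ∧ c ≤ n := by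
  have := hG h
  simp only [Grid, Finset.mem_product, Finset.mem_Icc] at this
  tauto

/-- Key maximality lemma: adding an empty grid cell creates a blocked house,
in one of four possible ways. -/
lemma key (m n : ℕ) (C : Finset (ℕ × ℕ)) (hC : MaximalConfig m n C)
    (i a : ℕ) (hi1 : 1 ≤ i) (him : i ≤ m) (ha1 : 1 ≤ a) (han : a ≤ n)
    (ha : (i, a) ∉ C) :
    ((i, a-1) ∈ C ∧ (i, a-2) ∈ C ∧ (i+1, a-1) ∈ C)
    ∨ ((i, a+1) ∈ C ∧ (i, a+2) ∈ C ∧ (i+1, a+1) ∈ C)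
    ∨ ((i, a+1) ∈ C ∧ (i, a-1) ∈ C ∧ (i+1, a) ∈ C)
    ∨ ((i-1, a) ∈ C ∧ (i-1, a+1) ∈ C ∧ (i-1, a-1) ∈ C) := by
  have hDC : C ⊆ insert (i, a) C := Finset.subset_insert _ _
  have hDne : insert (i, a) C ≠ C := by
    intro h
    exact ha (h ▸ Finset.mem_insert_self (i, a) C)
  have hperm : ¬ Permissible m n (insert (i, a) C) := fun h => hDne (hC.2 _ h hDC)
  have hDGrid : insert (i, a) C ⊆ Grid m n := by
    intro p hp
    rcases Finset.mem_insert.mp hp with rfl | hp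
    · simp only [Grid, Finset.mem_product, Finset.mem_Icc]
      exact ⟨⟨hi1, him⟩, ⟨ha1, han⟩⟩
    · exact hC.1.1 hp
  have hex : ∃ p ∈ insert (i, a) C, Blocked (insert (i, a) C) p := by
    by_contra h
    push_neg at h
    exact hperm ⟨hDGrid, h⟩
  obtain ⟨⟨p1, p2⟩, hpD, he, hw, hs⟩ := hex
  simp only at he hw hs
  rcases Finset.mem_insert.mp hpD with hp | hpC
  · -- p = (i,a) : the added house itself is blocked
    rw [Prod.mk.injEq] at hp
    obtain ⟨hp1, hp2⟩ := hp
    rw [hp1, hp2] at he hw hs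
    have he' : (i, a + 1) ∈ C := by
      rcases Finset.mem_insert.mp he with h | h
      · exfalso; rw [Prod.mk.injEq] at h; omega
      · exact h
    have hw' : (i, a - 1) ∈ C := by
      rcases Finset.mem_insert.mp hw with h | h
      · exfalso; rw [Prod.mk.injEq] at h; omega
      · exact h
    have hs' : (i + 1, a) ∈ C := by
      rcases Finset.mem_insert.mp hs with h | h
      · exfalso; rw [Prod.mk.injEq] at h; omega
      · exact h
    exact Or.inr (Or.inr (Or.inl ⟨he', hw', hs'⟩))
  · -- p ∈ C, and p is not blocked in C, so one of its neighbours equals (i,a)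
    have hnb : ¬ Blocked C (p1, p2) := hC.1.2 _ hpC
    rcases Finset.mem_insert.mp he with he1 | he2
    · -- east neighbour of p is (i,a) : p = (i, a-1)
      rw [Prod.mk.injEq] at he1
      obtain ⟨h1, h2⟩ := he1
      have hp1 : p1 = i := h1
      have hp2 : p2 = a - 1 := by omega
      rw [hp1, hp2] at hpC hw hs
      have hw' : (i, a - 2) ∈ C := by
        rcases Finset.mem_insert.mp hw with h | h
        · exfalso; rw [Prod.mk.injEq] at h; omega
        · have e : a - 1 - 1 = a - 2 := by omega
          rwa [e] at h
      have hs' : (i + 1, a - 1) ∈ C := by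
        rcases Finset.mem_insert.mp hs with h | h
        · exfalso; rw [Prod.mk.injEq] at h; omega
        · exact h
      exact Or.inl ⟨hpC, hw', hs'⟩
    · rcases Finset.mem_insert.mp hw with hw1 | hw2
      · -- west neighbour of p is (i,a) : p = (i, a+1)
        rw [Prod.mk.injEq] at hw1
        obtain ⟨h1, h2⟩ := hw1
        have hp1 : p1 = i := h1
        have hp2 : p2 = a + 1 := by omega
        rw [hp1, hp2] at hpC he2 hs
        have he' : (i, a + 2) ∈ C := by
          have e : a + 1 + 1 = a + 2 := by omega
          rwa [e] at he2
        have hs' : (i + 1, a + 1) ∈ C := by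
          rcases Finset.mem_insert.mp hs with h | h
          · exfalso; rw [Prod.mk.injEq] at h; omega
          · exact h
        exact Or.inr (Or.inl ⟨hpC, he', hs'⟩)
      · rcases Finset.mem_insert.mp hs with hs1 | hs2
        · -- south neighbour of p is (i,a) : p = (i-1, a)
          rw [Prod.mk.injEq] at hs1
          obtain ⟨h1, h2⟩ := hs1
          have hp1 : p1 = i - 1 := by omega
          rw [hp1, h2] at hpC he2 hw2
          exact Or.inr (Or.inr (Or.inr ⟨hpC, he2, hw2⟩))
        · exact absurd ⟨he2, hw2, hs2⟩ hnb

/-- Row pair bound: each row has at least 2 occupied cells in the window,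
or together with the row above it has at least 4. -/
lemma pairbound (m n : ℕ) (C : Finset (ℕ × ℕ)) (hC : MaximalConfig m n C)
    (t i : ℕ) (ht1 : 1 ≤ t) (htn : t + 3 ≤ n) (hi1 : 1 ≤ i) (him : i ≤ m) :
    2 ≤ ff C t i ∨ (2 ≤ i ∧ 4 ≤ ff C t (i-1) + ff C t i) := by
  by_cases h0 : (i, t) ∈ C <;> by_cases h1 : (i, t+1) ∈ C <;>
    by_cases h2 : (i, t+2) ∈ C <;> by_cases h3 : (i, t+3) ∈ C
  all_goals try (left; simp [ff, bb, h0, h1, h2, h3] <;> omega; done)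
  -- remaining cases: at most one of the four cells occupied
  -- case: only (i,t) occupied : add (i, t+2)
  · right
    have hk := key m n C hC i (t+2) hi1 him (by omega) (by omega) h2
    have e1 : t + 2 - 1 = t + 1 := by omega
    have e2 : t + 2 + 1 = t + 3 := by omega
    rw [e1, e2] at hk
    rcases hk with ⟨hA, _, _⟩ | ⟨hA, _, _⟩ | ⟨hA, _, _⟩ | ⟨hA, hB, hD⟩
    · exact absurd hA h1
    · exact absurd hA h3
    · exact absurd hA h3
    · have hrow := (grid_bounds hC.1.1 hA).1
      refine ⟨by omega, ?_⟩
      simp only [ff, bb_one hA, bb_one hB, bb_one hD, bb_one h0]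
      omega
  -- case: only (i,t+1) occupied : add (i, t+2)
  · right
    have hk := key m n C hC i (t+2) hi1 him (by omega) (by omega) h2
    have e0 : t + 2 - 2 = t := by omega
    have e1 : t + 2 - 1 = t + 1 := by omega
    have e2 : t + 2 + 1 = t + 3 := by omega
    rw [e0, e1, e2] at hk
    rcases hk with ⟨_, hA, _⟩ | ⟨hA, _, _⟩ | ⟨hA, _, _⟩ | ⟨hA, hB, hD⟩
    · exact absurd hA h0
    · exact absurd hA h3
    · exact absurd hA h3
    · have hrow := (grid_bounds hC.1.1 hA).1
      refine ⟨by omega, ?_⟩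
      simp only [ff, bb_one hA, bb_one hB, bb_one hD, bb_one h1]
      omega
  -- case: only (i,t+2) occupied : add (i, t+1)
  · right
    have hk := key m n C hC i (t+1) hi1 him (by omega) (by omega) h1
    have e1 : t + 1 - 1 = t := by omega
    have e2 : t + 1 + 1 = t + 2 := by omega
    have e3 : t + 1 + 2 = t + 3 := by omega
    rw [e1, e2, e3] at hk
    rcases hk with ⟨hA, _, _⟩ | ⟨_, hA, _⟩ | ⟨_, hA, _⟩ | ⟨hA, hB, hD⟩
    · exact absurd hA h0
    · exact absurd hA h3
    · exact absurd hA h0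
    · have hrow := (grid_bounds hC.1.1 hA).1
      refine ⟨by omega, ?_⟩
      simp only [ff, bb_one hA, bb_one hB, bb_one hD, bb_one h2]
      omega
  -- case: only (i,t+3) occupied : add (i, t+1)
  · right
    have hk := key m n C hC i (t+1) hi1 him (by omega) (by omega) h1
    have e1 : t + 1 - 1 = t := by omega
    have e2 : t + 1 + 1 = t + 2 := by omega
    rw [e1, e2] at hk
    rcases hk with ⟨hA, _, _⟩ | ⟨hA, _, _⟩ | ⟨hA, _, _⟩ | ⟨hA, hB, hD⟩
    · exact absurd hA h0
    · exact absurd hA h2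
    · exact absurd hA h2
    · have hrow := (grid_bounds hC.1.1 hA).1
      refine ⟨by omega, ?_⟩
      simp only [ff, bb_one hA, bb_one hB, bb_one hD, bb_one h3]
      omega
  -- case: all four empty : add (i, t+1) and (i, t+2)
  · right
    have hk1 := key m n C hC i (t+1) hi1 him (by omega) (by omega) h1
    have e1 : t + 1 - 1 = t := by omega
    have e2 : t + 1 + 1 = t + 2 := by omega
    rw [e1, e2] at hk1
    have hk2 := key m n C hC i (t+2) hi1 him (by omega) (by omega) h2
    have e1' : t + 2 - 1 = t + 1 := by omega
    have e2' : t + 2 + 1 = t + 3 := by omega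
    rw [e1', e2'] at hk2
    rcases hk1 with ⟨hA, _, _⟩ | ⟨hA, _, _⟩ | ⟨hA, _, _⟩ | ⟨hA1, hB1, hD1⟩
    · exact absurd hA h0
    · exact absurd hA h2
    · exact absurd hA h2
    · rcases hk2 with ⟨hA, _, _⟩ | ⟨hA, _, _⟩ | ⟨hA, _, _⟩ | ⟨hA2, hB2, hD2⟩
      · exact absurd hA h1
      · exact absurd hA h3
      · exact absurd hA h3
      · have hrow := (grid_bounds hC.1.1 hA1).1
        refine ⟨by omega, ?_⟩
        simp only [ff, bb_one hA1, bb_one hB1, bb_one hD1, bb_one hB2]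
        omega

lemma cardsum (C : Finset (ℕ × ℕ)) (l t : ℕ) :
    (C ∩ (Finset.Icc 1 l ×ˢ Finset.Icc t (t + 3))).card
      = ∑ i ∈ Finset.Icc 1 l, ff C t i := by
  rw [Finset.inter_comm, ← Finset.filter_mem_eq_inter, Finset.card_filter,
    Finset.sum_product]
  apply Finset.sum_congr rfl
  intro i _
  have hIcc : Finset.Icc t (t+3) = {t, t+1, t+2, t+3} := by
    ext x
    simp only [Finset.mem_Icc, Finset.mem_insert, Finset.mem_singleton]
    omega
  rw [hIcc]
  rw [Finset.sum_insert (by simp), Finset.sum_insert (by simp),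
    Finset.sum_insert (by simp), Finset.sum_singleton]
  simp [ff, bb, add_assoc]

/-- For any maximal configuration on the m×n grid (m ≥ 2, n ≥ 4), any 1 ≤ l ≤ m
and any block of four consecutive columns t,…,t+3 inside the grid (1 ≤ t,
t ≤ n-3), the restriction to these columns of the top l rows contains at
least 2l occupied lots. -/
theorem four_columns (m n : ℕ) (hm : 2 ≤ m) (hn : 4 ≤ n)
    (C : Finset (ℕ × ℕ)) (hC : MaximalConfig m n C)
    (l t : ℕ) (hl1 : 1 ≤ l) (hlm : l ≤ m) (ht1 : 1 ≤ t) (htn : t + 3 ≤ n) :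
    2 * l ≤ (C ∩ (Finset.Icc 1 l ×ˢ Finset.Icc t (t + 3))).card := by
  rw [cardsum]
  clear hl1
  induction l using Nat.strong_induction_on with
  | _ l ih =>
    match l, hlm with
    | 0, _ => simp
    | 1, hlm =>
      have hpb := pairbound m n C hC t 1 ht1 htn (by omega) (by omega)
      rcases hpb with h | ⟨h, _⟩
      · simpa using h
      · omega
    | (k+2), hlm =>
      have hsplit : ∑ i ∈ Finset.Icc 1 (k+2), ff C t i
          = (∑ i ∈ Finset.Icc 1 (k+1), ff C t i) + ff C t (k+2) :=
        Finset.sum_Icc_succ_top (by omega) _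
      rcases pairbound m n C hC t (k+2) ht1 htn (by omega) hlm with h | ⟨_, h⟩
      · have := ih (k+1) (by omega) (by omega)
        omega
      · have hsplit2 : ∑ i ∈ Finset.Icc 1 (k+1), ff C t i
            = (∑ i ∈ Finset.Icc 1 k, ff C t i) + ff C t (k+1) :=
          Finset.sum_Icc_succ_top (by omega) _
        have := ih k (by omega) (by omega)
        have e : k + 2 - 1 = k + 1 := by omega
        rw [e] at h
        omega
end

section
/- For all m,n ≥ 2 there exists a maximal configuration C on the m×n grid whose occupancy attains the minimal value: |C| = mn/2 + 2 if n ≡ 0 (mod 4); |C| = m(n+2)/2 if n ≡ 2 (mod 4); and |C| = m(n+1)/2 + 1 if n is odd. (Such configurations are given by the rake–stripe pattern, so these values equal I_{m,n}, the minimal occupancy among all maximal configurations.) -/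
/-- Teeth columns of the rake, depending on n mod 4. -/
def Teeth (r j : ℕ) : Prop :=
  if r = 0 then j % 4 = 2 ∨ j % 4 = 3
  else if r = 1 then j = 1 ∨ j % 4 = 3 ∨ j % 4 = 0
  else j % 4 = 1 ∨ j % 4 = 2

instance (r j : ℕ) : Decidable (Teeth r j) := by unfold Teeth; infer_instance

/-- The rake configuration: teeth in rows 1..m-2, full row m-1, corners in row m. -/
def rakeC (m n : ℕ) : Finset (ℕ × ℕ) :=
  (Grid m n).filter fun p =>
    (p.1 + 2 ≤ m ∧ Teeth (n % 4) p.2) ∨ p.1 = m - 1 ∨ (p.1 = m ∧ (p.2 = 1 ∨ p.2 = n))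

lemma mem_rakeC {m n i j : ℕ} :
    (i, j) ∈ rakeC m n ↔ 1 ≤ i ∧ i ≤ m ∧ 1 ≤ j ∧ j ≤ n ∧
      ((i + 2 ≤ m ∧ Teeth (n % 4) j) ∨ i = m - 1 ∨ (i = m ∧ (j = 1 ∨ j = n))) := by
  simp [rakeC, Grid, Finset.mem_filter, Finset.mem_product, Finset.mem_Icc, and_assoc]

lemma teeth_no3 {n j : ℕ} (h2 : 2 ≤ j) (ha : Teeth (n % 4) (j - 1))
    (hb : Teeth (n % 4) j) (hc : Teeth (n % 4) (j + 1)) : False := by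
  rcases (by omega : n % 4 = 0 ∨ n % 4 = 1 ∨ n % 4 = 2 ∨ n % 4 = 3) with h0 | h0 | h0 | h0 <;>
    simp only [Teeth, h0] at ha hb hc <;> norm_num at ha hb hc <;> omega

lemma teeth_gap {n j : ℕ} (hn : 2 ≤ n) (h1 : 1 ≤ j) (h2 : j ≤ n)
    (h : ¬ Teeth (n % 4) j) :
    (3 ≤ j ∧ Teeth (n % 4) (j - 1) ∧ Teeth (n % 4) (j - 2)) ∨
    (j + 2 ≤ n ∧ Teeth (n % 4) (j + 1) ∧ Teeth (n % 4) (j + 2)) := by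
  rcases (by omega : n % 4 = 0 ∨ n % 4 = 1 ∨ n % 4 = 2 ∨ n % 4 = 3) with h0 | h0 | h0 | h0 <;>
    simp only [Teeth, h0] at h ⊢ <;> norm_num at h ⊢ <;> omega

lemma teeth_card_aux (r k : ℕ) (hr : r < 4) :
    2 * ((Finset.Icc 1 (4 * k + r)).filter fun j => Teeth r j).card =
      (4 * k + r) + (if r = 0 then 0 else if r = 2 then 2 else 1) := by
  induction k with
  | zero => interval_cases r <;> decide
  | succ k ih =>
      have hsplit : Finset.Icc 1 (4 * (k + 1) + r) =
          Finset.Icc 1 (4 * k + r) ∪ Finset.Ioc (4 * k + r) (4 * (k + 1) + r) := by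
        ext x
        simp only [Finset.mem_Icc, Finset.mem_Ioc, Finset.mem_union]
        omega
      have hdisj : Disjoint ((Finset.Icc 1 (4 * k + r)).filter fun j => Teeth r j)
          ((Finset.Ioc (4 * k + r) (4 * (k + 1) + r)).filter fun j => Teeth r j) := by
        apply Finset.disjoint_filter_filter
        rw [Finset.disjoint_left]
        intro a ha hb
        simp only [Finset.mem_Icc, Finset.mem_Ioc] at ha hb
        omega
      rw [hsplit, Finset.filter_union, Finset.card_union_of_disjoint hdisj]
      have hpair : ((Finset.Ioc (4 * k + r) (4 * (k + 1) + r)).filter fun j => Teeth r j).card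
          = 2 := by
        interval_cases r
        · have h : ((Finset.Ioc (4 * k + 0) (4 * (k + 1) + 0)).filter fun j => Teeth 0 j)
              = {4 * k + 2, 4 * k + 3} := by
            ext x
            simp only [Finset.mem_filter, Finset.mem_Ioc, Teeth,
              Finset.mem_insert, Finset.mem_singleton]
            norm_num
            omega
          rw [h]; exact Finset.card_pair (by omega)
        · have h : ((Finset.Ioc (4 * k + 1) (4 * (k + 1) + 1)).filter fun j => Teeth 1 j)
              = {4 * k + 3, 4 * k + 4} := by
            ext x
            simp only [Finset.mem_filter, Finset.mem_Ioc, Teeth,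
              Finset.mem_insert, Finset.mem_singleton]
            norm_num
            omega
          rw [h]; exact Finset.card_pair (by omega)
        · have h : ((Finset.Ioc (4 * k + 2) (4 * (k + 1) + 2)).filter fun j => Teeth 2 j)
              = {4 * k + 5, 4 * k + 6} := by
            ext x
            simp only [Finset.mem_filter, Finset.mem_Ioc, Teeth,
              Finset.mem_insert, Finset.mem_singleton]
            norm_num
            omega
          rw [h]; exact Finset.card_pair (by omega)
        · have h : ((Finset.Ioc (4 * k + 3) (4 * (k + 1) + 3)).filter fun j => Teeth 3 j)
              = {4 * k + 5, 4 * k + 6} := by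
            ext x
            simp only [Finset.mem_filter, Finset.mem_Ioc, Teeth,
              Finset.mem_insert, Finset.mem_singleton]
            norm_num
            omega
          rw [h]; exact Finset.card_pair (by omega)
      rw [hpair]
      omega

lemma teeth_card (n : ℕ) :
    2 * ((Finset.Icc 1 n).filter fun j => Teeth (n % 4) j).card =
      if n % 4 = 0 then n else if n % 4 = 2 then n + 2 else n + 1 := by
  have h := teeth_card_aux (n % 4) (n / 4) (by omega)
  have hn : 4 * (n / 4) + n % 4 = n := by omega
  rw [hn] at h
  rcases (by omega : n % 4 = 0 ∨ n % 4 = 1 ∨ n % 4 = 2 ∨ n % 4 = 3) with h0 | h0 | h0 | h0 <;>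
    simp [h0] at h ⊢ <;> omega

lemma rakeC_card (m n : ℕ) (hm : 2 ≤ m) (hn : 2 ≤ n) :
    2 * (rakeC m n).card =
      (m - 2) * (2 * ((Finset.Icc 1 n).filter fun j => Teeth (n % 4) j).card) + 2 * n + 4 := by
  set T := (Finset.Icc 1 n).filter fun j => Teeth (n % 4) j with hT
  have hset : rakeC m n =
      (Finset.Icc 1 (m - 2) ×ˢ T) ∪ ({m - 1} ×ˢ Finset.Icc 1 n)
        ∪ ({m} ×ˢ ({1, n} : Finset ℕ)) := by
    ext ⟨i, j⟩
    simp only [mem_rakeC, Finset.mem_union, Finset.mem_product, Finset.mem_Icc,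
      Finset.mem_singleton, Finset.mem_insert, hT, Finset.mem_filter]
    by_cases ht : Teeth (n % 4) j <;> simp [ht] <;> omega
  have hd1 : Disjoint (Finset.Icc 1 (m - 2) ×ˢ T) ({m - 1} ×ˢ Finset.Icc 1 n) := by
    rw [Finset.disjoint_left]
    rintro ⟨i, j⟩ h1 h2
    simp only [Finset.mem_product, Finset.mem_Icc, Finset.mem_singleton] at h1 h2
    omega
  have hd2 : Disjoint ((Finset.Icc 1 (m - 2) ×ˢ T) ∪ ({m - 1} ×ˢ Finset.Icc 1 n))
      ({m} ×ˢ ({1, n} : Finset ℕ)) := by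
    rw [Finset.disjoint_left]
    rintro ⟨i, j⟩ h1 h2
    simp only [Finset.mem_union, Finset.mem_product, Finset.mem_Icc,
      Finset.mem_singleton] at h1 h2
    omega
  rw [hset, Finset.card_union_of_disjoint hd2, Finset.card_union_of_disjoint hd1,
    Finset.card_product, Finset.card_product, Finset.card_product, Nat.card_Icc, Nat.card_Icc,
    Finset.card_singleton, Finset.card_singleton, Finset.card_pair (by omega : 1 ≠ n)]
  have e1 : m - 2 + 1 - 1 = m - 2 := by omega
  have e2 : n + 1 - 1 = n := by omega
  rw [e1, e2]
  ring

lemma rake_permissible (m n : ℕ) (hm : 2 ≤ m) (hn : 2 ≤ n) : Permissible m n (rakeC m n) := by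
  constructor
  · exact Finset.filter_subset _ _
  · rintro ⟨i, j⟩ hp hb
    obtain ⟨hE, hW, hS⟩ := hb
    simp only at hE hW hS
    rw [mem_rakeC] at hp hE hW hS
    have hj2 : 2 ≤ j := by have := hW.2.2.1; omega
    rcases hp.2.2.2.2 with ⟨hi, ht⟩ | hi | ⟨hi, hj⟩
    · have htE : Teeth (n % 4) (j + 1) := by
        rcases hE.2.2.2.2 with ⟨_, h⟩ | h | ⟨h, _⟩ <;> first | exact h | omega
      have htW : Teeth (n % 4) (j - 1) := by
        rcases hW.2.2.2.2 with ⟨_, h⟩ | h | ⟨h, _⟩ <;> first | exact h | omega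
      exact teeth_no3 hj2 htW ht htE
    · rcases hS.2.2.2.2 with ⟨h, _⟩ | h | ⟨_, h⟩
      · omega
      · omega
      · have h5 := hW.2.2.1
        have h6 := hE.2.2.2.1
        omega
    · have := hS.2.1
      omega

lemma rake_maximal (m n : ℕ) (hm : 2 ≤ m) (hn : 2 ≤ n) : MaximalConfig m n (rakeC m n) := by
  refine ⟨rake_permissible m n hm hn, ?_⟩
  intro D hD hCD
  refine Finset.Subset.antisymm ?_ hCD
  rintro ⟨i, j⟩ hpD
  by_contra hpC
  obtain ⟨hDg, hDbl⟩ := hD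
  have hgrid := hDg hpD
  simp only [Grid, Finset.mem_product, Finset.mem_Icc] at hgrid
  obtain ⟨⟨hi1, hi2⟩, hj1, hj2⟩ := hgrid
  rw [mem_rakeC] at hpC
  push_neg at hpC
  obtain ⟨h1, h2, h3⟩ := hpC hi1 hi2 hj1 hj2
  rcases (by omega : i = m ∨ i + 2 ≤ m) with hi | hi
  · -- p is in the bottom row; the house above it in the full row m-1 gets blocked
    have hj : 2 ≤ j ∧ j + 1 ≤ n := by
      have h4 := h3 hi
      omega
    refine hDbl (m - 1, j) (hCD ?_) ⟨hCD ?_, hCD ?_, ?_⟩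
    · exact mem_rakeC.mpr ⟨by omega, by omega, by omega, by omega, Or.inr (Or.inl rfl)⟩
    · exact mem_rakeC.mpr ⟨by omega, by omega, by omega, by omega, Or.inr (Or.inl rfl)⟩
    · exact mem_rakeC.mpr ⟨by omega, by omega, by omega, by omega, Or.inr (Or.inl rfl)⟩
    · show (m - 1 + 1, j) ∈ D
      have he : m - 1 + 1 = m := by omega
      rw [he, ← hi]
      exact hpD
  · -- p is in a gap column among the teeth rows
    have ht : ¬ Teeth (n % 4) j := h1 hi
    have hrowS : ∀ jc : ℕ, 1 ≤ jc → jc ≤ n → Teeth (n % 4) jc → (i + 1, jc) ∈ rakeC m n := by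
      intro jc hc1 hc2 hc3
      rcases (by omega : i + 1 + 2 ≤ m ∨ i + 1 = m - 1) with h | h
      · exact mem_rakeC.mpr ⟨by omega, by omega, hc1, hc2, Or.inl ⟨h, hc3⟩⟩
      · exact mem_rakeC.mpr ⟨by omega, by omega, hc1, hc2, Or.inr (Or.inl h)⟩
    rcases teeth_gap hn hj1 hj2 ht with ⟨hw, hw1, hw2⟩ | ⟨he, he1, he2⟩
    · -- west trigger: house (i, j-1) gets blocked
      refine hDbl (i, j - 1) (hCD ?_) ⟨?_, ?_, hCD ?_⟩
      · exact mem_rakeC.mpr ⟨hi1, by omega, by omega, by omega, Or.inl ⟨hi, hw1⟩⟩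
      · show (i, j - 1 + 1) ∈ D
        have he' : j - 1 + 1 = j := by omega
        rw [he']
        exact hpD
      · show (i, j - 1 - 1) ∈ D
        have he' : j - 1 - 1 = j - 2 := by omega
        rw [he']
        exact hCD (mem_rakeC.mpr ⟨hi1, by omega, by omega, by omega, Or.inl ⟨hi, hw2⟩⟩)
      · exact hrowS (j - 1) (by omega) (by omega) hw1
    · -- east trigger: house (i, j+1) gets blocked
      refine hDbl (i, j + 1) (hCD ?_) ⟨hCD ?_, ?_, hCD ?_⟩
      · exact mem_rakeC.mpr ⟨hi1, by omega, by omega, by omega, Or.inl ⟨hi, he1⟩⟩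
      · exact mem_rakeC.mpr ⟨hi1, by omega, by omega, by omega, Or.inl ⟨hi, he2⟩⟩
      · show (i, j + 1 - 1) ∈ D
        have he' : j + 1 - 1 = j := by omega
        rw [he']
        exact hpD
      · exact hrowS (j + 1) (by omega) (by omega) he1

/-- The sharp lower bound is attained: for all m,n ≥ 2 there is a maximal
configuration (e.g. the rake–stripe pattern) of occupancy mn/2 + 2 when
n ≡ 0 (mod 4), m(n+2)/2 when n ≡ 2 (mod 4), and m(n+1)/2 + 1 when n is odd
(stated multiplied out by 2, all these expressions being integers). -/
theorem inefficient_exists (m n : ℕ) (hm : 2 ≤ m) (hn : 2 ≤ n) :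
    ∃ C : Finset (ℕ × ℕ), MaximalConfig m n C ∧
      (n % 4 = 0 → 2 * C.card = m * n + 4) ∧
      (n % 4 = 2 → 2 * C.card = m * (n + 2)) ∧
      (n % 2 = 1 → 2 * C.card = m * (n + 1) + 2) := by
  obtain ⟨c, rfl⟩ : ∃ c, m = c + 2 := ⟨m - 2, by omega⟩
  have hc := rakeC_card (c + 2) n hm hn
  have htc := teeth_card n
  simp only [Nat.add_sub_cancel] at hc
  refine ⟨rakeC (c + 2) n, rake_maximal (c + 2) n hm hn, ?_, ?_, ?_⟩
  · intro hr
    rw [if_pos hr] at htc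
    rw [htc] at hc
    rw [hc]; ring
  · intro hr
    rw [if_neg (by omega), if_pos hr] at htc
    rw [htc] at hc
    rw [hc]; ring
  · intro hr
    rw [if_neg (by omega), if_neg (by omega)] at htc
    rw [htc] at hc
    rw [hc]; ring
end

section
/- If C is any maximal configuration on the m×n grid with m,n ≥ 2, then |C| ≤ mn - ⌊n/4⌋·(m-1) when n ≢ 3 (mod 4), and |C| ≤ mn - ⌊n/4⌋·(m-1) - ⌊m/2⌋ when n ≡ 3 (mod 4). -/
namespace AuxEmn

/-- number of empty lots in row `i` among columns `a..b` -/
def ec (C : Finset (ℕ × ℕ)) (a b i : ℕ) : ℕ :=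
  ((Finset.Icc a b).filter (fun j => (i, j) ∉ C)).card

lemma ec_zero {C : Finset (ℕ × ℕ)} {a b i : ℕ} (h : ec C a b i = 0) :
    ∀ j ∈ Finset.Icc a b, (i, j) ∈ C := by
  intro j hj
  by_contra hc
  have hmem : j ∈ (Finset.Icc a b).filter (fun j => (i, j) ∉ C) :=
    Finset.mem_filter.2 ⟨hj, hc⟩
  rw [ec, Finset.card_eq_zero] at h
  simp [h] at hmem

lemma key4 {C : Finset (ℕ × ℕ)} (hC : ∀ p ∈ C, ¬ Blocked C p) {a i : ℕ}
    (h : ec C a (a + 3) i = 0) : 2 ≤ ec C a (a + 3) (i + 1) := by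
  have hall := ec_zero h
  have h1 : (i + 1, a + 1) ∉ C := by
    intro hmem
    exact hC (i, a + 1) (hall (a + 1) (Finset.mem_Icc.2 ⟨by omega, by omega⟩))
      ⟨by simpa using hall (a + 2) (Finset.mem_Icc.2 ⟨by omega, by omega⟩),
       by simpa using hall a (Finset.mem_Icc.2 ⟨by omega, by omega⟩), hmem⟩
  have h2 : (i + 1, a + 2) ∉ C := by
    intro hmem
    exact hC (i, a + 2) (hall (a + 2) (Finset.mem_Icc.2 ⟨by omega, by omega⟩))
      ⟨by simpa using hall (a + 3) (Finset.mem_Icc.2 ⟨by omega, by omega⟩),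
       by simpa using hall (a + 1) (Finset.mem_Icc.2 ⟨by omega, by omega⟩), hmem⟩
  have hsub : ({a + 1, a + 2} : Finset ℕ) ⊆
      (Finset.Icc a (a + 3)).filter (fun j => (i + 1, j) ∉ C) := by
    intro x hx
    rcases Finset.mem_insert.1 hx with h' | h'
    · subst h'; exact Finset.mem_filter.2 ⟨Finset.mem_Icc.2 ⟨by omega, by omega⟩, h1⟩
    · rw [Finset.mem_singleton] at h'
      subst h'; exact Finset.mem_filter.2 ⟨Finset.mem_Icc.2 ⟨by omega, by omega⟩, h2⟩
  calc (2 : ℕ) = ({a + 1, a + 2} : Finset ℕ).card := by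
        rw [Finset.card_pair (by omega)]
    _ ≤ _ := Finset.card_le_card hsub

lemma key3 {C : Finset (ℕ × ℕ)} (hC : ∀ p ∈ C, ¬ Blocked C p) {a i : ℕ}
    (h : ec C a (a + 2) i = 0) : 1 ≤ ec C a (a + 2) (i + 1) := by
  have hall := ec_zero h
  have h1 : (i + 1, a + 1) ∉ C := by
    intro hmem
    exact hC (i, a + 1) (hall (a + 1) (Finset.mem_Icc.2 ⟨by omega, by omega⟩))
      ⟨by simpa using hall (a + 2) (Finset.mem_Icc.2 ⟨by omega, by omega⟩),
       by simpa using hall a (Finset.mem_Icc.2 ⟨by omega, by omega⟩), hmem⟩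
  have hmem : a + 1 ∈ (Finset.Icc a (a + 2)).filter (fun j => (i + 1, j) ∉ C) :=
    Finset.mem_filter.2 ⟨Finset.mem_Icc.2 ⟨by omega, by omega⟩, h1⟩
  exact Finset.card_pos.2 ⟨a + 1, hmem⟩

lemma inv4 {C : Finset (ℕ × ℕ)} (hC : ∀ p ∈ C, ¬ Blocked C p) (a : ℕ) :
    ∀ i, 1 ≤ i → i ≤ (∑ i' ∈ Finset.Icc 1 i, ec C a (a + 3) i')
        + (if ec C a (a + 3) i = 0 then 1 else 0) := by
  intro i
  induction i with
  | zero => omega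
  | succ k ih =>
    intro _
    by_cases hk : 1 ≤ k
    · have hIH := ih hk
      rw [Finset.sum_Icc_succ_top (by omega)]
      by_cases h1 : ec C a (a + 3) (k + 1) = 0
      · have h0 : ec C a (a + 3) k ≠ 0 := by
          intro h0
          have := key4 hC h0
          omega
        rw [if_neg h0] at hIH
        rw [if_pos h1]
        omega
      · by_cases h0 : ec C a (a + 3) k = 0
        · have h2 := key4 hC h0
          rw [if_pos h0] at hIH
          rw [if_neg h1]
          omega
        · simp only [h0, if_false] at hIH
          simp only [h1, if_false]
          omega
    · have hk0 : k = 0 := by omega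
      subst hk0
      rw [show (0 + 1) = 1 from rfl, Finset.Icc_self, Finset.sum_singleton]
      by_cases h1 : ec C a (a + 3) 1 = 0
      · simp [h1]
      · rw [if_neg h1]
        omega

lemma inv3 {C : Finset (ℕ × ℕ)} (hC : ∀ p ∈ C, ¬ Blocked C p) (a : ℕ) :
    ∀ i, 1 ≤ i → i ≤ 2 * (∑ i' ∈ Finset.Icc 1 i, ec C a (a + 2) i')
        + (if ec C a (a + 2) i = 0 then 1 else 0) := by
  intro i
  induction i with
  | zero => omega
  | succ k ih =>
    intro _
    by_cases hk : 1 ≤ k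
    · have hIH := ih hk
      rw [Finset.sum_Icc_succ_top (by omega)]
      by_cases h1 : ec C a (a + 2) (k + 1) = 0
      · have h0 : ec C a (a + 2) k ≠ 0 := by
          intro h0
          have := key3 hC h0
          omega
        rw [if_neg h0] at hIH
        rw [if_pos h1]
        omega
      · by_cases h0 : ec C a (a + 2) k = 0
        · have h2 := key3 hC h0
          rw [if_pos h0] at hIH
          rw [if_neg h1]
          omega
        · simp only [h0, if_false] at hIH
          simp only [h1, if_false]
          omega
    · have hk0 : k = 0 := by omega
      subst hk0
      rw [show (0 + 1) = 1 from rfl, Finset.Icc_self, Finset.sum_singleton]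
      by_cases h1 : ec C a (a + 2) 1 = 0
      · simp [h1]
      · rw [if_neg h1]
        omega

lemma block_bound {C : Finset (ℕ × ℕ)} (hC : ∀ p ∈ C, ¬ Blocked C p) (m a : ℕ)
    (hm : 1 ≤ m) : m - 1 ≤ ∑ i ∈ Finset.Icc 1 m, ec C a (a + 3) i := by
  have := inv4 hC a m hm
  by_cases h : ec C a (a + 3) m = 0
  · rw [if_pos h] at this; omega
  · rw [if_neg h] at this; omega

lemma strip_bound {C : Finset (ℕ × ℕ)} (hC : ∀ p ∈ C, ¬ Blocked C p) (m a : ℕ)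
    (hm : 1 ≤ m) : m / 2 ≤ ∑ i ∈ Finset.Icc 1 m, ec C a (a + 2) i := by
  have := inv3 hC a m hm
  by_cases h : ec C a (a + 2) m = 0
  · rw [if_pos h] at this; omega
  · rw [if_neg h] at this; omega

lemma card_prod_filter (C : Finset (ℕ × ℕ)) (m a b : ℕ) :
    ((Finset.Icc 1 m ×ˢ Finset.Icc a b).filter (fun p => p ∉ C)).card
      = ∑ i ∈ Finset.Icc 1 m, ec C a b i := by
  rw [Finset.card_filter, Finset.sum_product]
  simp only [ec, Finset.card_filter]

end AuxEmn

/-- Upper bound on E_{m,n}: any maximal configuration on the m×n grid (m,n ≥ 2)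
satisfies |C| ≤ mn - ⌊n/4⌋(m-1) when n ≢ 3 (mod 4), and
|C| ≤ mn - ⌊n/4⌋(m-1) - ⌊m/2⌋ when n ≡ 3 (mod 4). -/
theorem upper_bound_Emn (m n : ℕ) (hm : 2 ≤ m) (hn : 2 ≤ n)
    (C : Finset (ℕ × ℕ)) (hC : MaximalConfig m n C) :
    (n % 4 ≠ 3 → C.card ≤ m * n - n / 4 * (m - 1)) ∧
    (n % 4 = 3 → C.card ≤ m * n - n / 4 * (m - 1) - m / 2) := by
  obtain ⟨⟨hsubC, hblk⟩, -⟩ := hC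
  set q := n / 4 with hq
  have hqn : 4 * q ≤ n := by omega
  set G : ℕ → Finset (ℕ × ℕ) :=
    fun k => (Finset.Icc 1 m ×ˢ Finset.Icc (4*k+1) (4*k+1+3)).filter (fun p => p ∉ C) with hGdef
  have hGcard : ∀ k, m - 1 ≤ (G k).card := by
    intro k
    rw [hGdef]
    show m - 1 ≤ ((Finset.Icc 1 m ×ˢ Finset.Icc (4*k+1) (4*k+1+3)).filter (fun p => p ∉ C)).card
    rw [AuxEmn.card_prod_filter]
    exact AuxEmn.block_bound hblk m (4*k+1) (by omega)
  have hdisj : ∀ k ∈ Finset.range q, ∀ l ∈ Finset.range q, k ≠ l → Disjoint (G k) (G l) := by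
    intro k _ l _ hkl
    rw [Finset.disjoint_left]
    intro p hpk hpl
    have h1 := Finset.mem_Icc.1 (Finset.mem_product.1 (Finset.mem_filter.1 hpk).1).2
    have h2 := Finset.mem_Icc.1 (Finset.mem_product.1 (Finset.mem_filter.1 hpl).1).2
    omega
  have hUcard : q * (m - 1) ≤ ((Finset.range q).biUnion G).card := by
    rw [Finset.card_biUnion hdisj]
    calc q * (m - 1) = ∑ _k ∈ Finset.range q, (m - 1) := by
          rw [Finset.sum_const, Finset.card_range, smul_eq_mul]
      _ ≤ _ := Finset.sum_le_sum (fun k _ => hGcard k)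
  have hUsub : (Finset.range q).biUnion G ⊆ Grid m n \ C := by
    intro p hp
    obtain ⟨k, hk, hpk⟩ := Finset.mem_biUnion.1 hp
    have hf := Finset.mem_filter.1 hpk
    have hpr := Finset.mem_product.1 hf.1
    have h1 := Finset.mem_Icc.1 hpr.1
    have h2 := Finset.mem_Icc.1 hpr.2
    have hk' := Finset.mem_range.1 hk
    refine Finset.mem_sdiff.2 ⟨?_, hf.2⟩
    simp only [Grid, Finset.mem_product, Finset.mem_Icc]
    omega
  have hGridcard : (Grid m n).card = m * n := by
    simp [Grid, Nat.card_Icc]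
  have hCle : C.card ≤ m * n := by
    have := Finset.card_le_card hsubC
    omega
  have hsd : (Grid m n \ C).card = m * n - C.card := by
    rw [Finset.card_sdiff_of_subset hsubC, hGridcard]
  constructor
  · intro _
    have h := Finset.card_le_card hUsub
    have hQ : q * (m - 1) ≤ m * n - C.card := by omega
    omega
  · intro h3
    have hn3 : n = 4 * q + 3 := by omega
    set S : Finset (ℕ × ℕ) :=
      (Finset.Icc 1 m ×ˢ Finset.Icc (4*q+1) (4*q+1+2)).filter (fun p => p ∉ C) with hSdef
    have hScard : m / 2 ≤ S.card := by
      rw [hSdef]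
      show m / 2 ≤ ((Finset.Icc 1 m ×ˢ Finset.Icc (4*q+1) (4*q+1+2)).filter (fun p => p ∉ C)).card
      rw [AuxEmn.card_prod_filter]
      exact AuxEmn.strip_bound hblk m (4*q+1) (by omega)
    have hdisjS : Disjoint ((Finset.range q).biUnion G) S := by
      rw [Finset.disjoint_left]
      intro p hp hpS
      obtain ⟨k, hk, hpk⟩ := Finset.mem_biUnion.1 hp
      have h1 := Finset.mem_Icc.1 (Finset.mem_product.1 (Finset.mem_filter.1 hpk).1).2
      have h2 := Finset.mem_Icc.1 (Finset.mem_product.1 (Finset.mem_filter.1 hpS).1).2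
      have hk' := Finset.mem_range.1 hk
      omega
    have hSsub : S ⊆ Grid m n \ C := by
      intro p hp
      have hf := Finset.mem_filter.1 hp
      have hpr := Finset.mem_product.1 hf.1
      have h1 := Finset.mem_Icc.1 hpr.1
      have h2 := Finset.mem_Icc.1 hpr.2
      refine Finset.mem_sdiff.2 ⟨?_, hf.2⟩
      simp only [Grid, Finset.mem_product, Finset.mem_Icc]
      omega
    have hUnion : ((Finset.range q).biUnion G) ∪ S ⊆ Grid m n \ C :=
      Finset.union_subset hUsub hSsub
    have hcardUnion : (((Finset.range q).biUnion G) ∪ S).card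
        = ((Finset.range q).biUnion G).card + S.card :=
      Finset.card_union_of_disjoint hdisjS
    have h := Finset.card_le_card hUnion
    have hQ : q * (m - 1) + m / 2 ≤ m * n - C.card := by omega
    omega
end

section
/- Let m ≥ 2, n ≥ 1, let C be any permissible configuration on the m×n grid, and let 2 ≤ r ≤ m. Then the number of occupied lots in row r-1 is at most n minus a third (rounded down) of the number of occupied lots in row r: |C ∩ ({r-1}×[n])| ≤ n - ⌊|C ∩ ({r}×[n])|/3⌋. -/
/-- For any permissible configuration on the m×n grid (m ≥ 2, n ≥ 1) and any
row 2 ≤ r ≤ m: if there are k occupied lots in row r, then there are at most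
n - ⌊k/3⌋ occupied lots in row r-1. -/
theorem row_above_bound (m n : ℕ) (hm : 2 ≤ m) (hn : 1 ≤ n)
    (C : Finset (ℕ × ℕ)) (hC : Permissible m n C)
    (r : ℕ) (hr2 : 2 ≤ r) (hrm : r ≤ m) :
    (C ∩ (({r - 1} : Finset ℕ) ×ˢ Finset.Icc 1 n)).card ≤
      n - (C ∩ (({r} : Finset ℕ) ×ˢ Finset.Icc 1 n)).card / 3 := by
  obtain ⟨hsub, hblk⟩ := hC
  classical
  set A : Finset ℕ := (Finset.Icc 1 n).filter (fun j => (r - 1, j) ∈ C) with hAdef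
  set S : Finset ℕ := (Finset.Icc 1 n).filter (fun j => (r, j) ∈ C) with hSdef
  set E : Finset ℕ := (Finset.Icc 1 n).filter (fun j => (r - 1, j) ∉ C) with hEdef
  -- card identifications
  have hAeq : C ∩ (({r - 1} : Finset ℕ) ×ˢ Finset.Icc 1 n) = ({r - 1} : Finset ℕ) ×ˢ A := by
    ext ⟨a, b⟩
    simp only [Finset.mem_inter, Finset.mem_product, Finset.mem_singleton, hAdef,
      Finset.mem_filter]
    constructor
    · rintro ⟨hp, rfl, hb⟩; exact ⟨rfl, hb, hp⟩
    · rintro ⟨rfl, hb, hp⟩; exact ⟨hp, rfl, hb⟩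
  have hSeq : C ∩ (({r} : Finset ℕ) ×ˢ Finset.Icc 1 n) = ({r} : Finset ℕ) ×ˢ S := by
    ext ⟨a, b⟩
    simp only [Finset.mem_inter, Finset.mem_product, Finset.mem_singleton, hSdef,
      Finset.mem_filter]
    constructor
    · rintro ⟨hp, rfl, hb⟩; exact ⟨rfl, hb, hp⟩
    · rintro ⟨rfl, hb, hp⟩; exact ⟨hp, rfl, hb⟩
  rw [hAeq, hSeq]
  simp only [Finset.card_product, Finset.card_singleton, one_mul]
  -- A.card + E.card = n
  have hAE : A.card + E.card = n := by
    have := Finset.card_filter_add_card_filter_not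
      (s := Finset.Icc 1 n) (p := fun j => (r - 1, j) ∈ C)
    simpa [hAdef, hEdef, Nat.card_Icc] using this
  -- the key inequality
  set f : ℕ → ℕ := fun j => if (r - 1, j - 1) ∈ C then (if (r - 1, j) ∈ C then j + 1 else j) else j - 1 with hfdef
  set S' : Finset ℕ := S.filter (fun j => 2 ≤ j ∧ j + 1 ≤ n) with hS'def
  have hmaps : ∀ j ∈ S', f j ∈ E ∧ j - 1 ≤ f j ∧ f j ≤ j + 1 := by
    intro j hj
    simp only [hS'def, hSdef, Finset.mem_filter, Finset.mem_Icc] at hj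
    obtain ⟨⟨⟨hj1, hjn⟩, hjC⟩, hj2, hjn1⟩ := hj
    have hnot : ¬ ((r - 1, j - 1) ∈ C ∧ (r - 1, j) ∈ C ∧ (r - 1, j + 1) ∈ C) := by
      rintro ⟨hw, hc, he⟩
      exact hblk (r - 1, j) hc ⟨he, hw, by
        have : r - 1 + 1 = r := by omega
        rw [this]; exact hjC⟩
    simp only [hEdef, Finset.mem_filter, Finset.mem_Icc, hfdef]
    by_cases h1 : (r - 1, j - 1) ∈ C
    · by_cases h2 : (r - 1, j) ∈ C
      · have h3 : (r - 1, j + 1) ∉ C := fun h => hnot ⟨h1, h2, h⟩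
        simp [h1, h2, h3]; omega
      · simp [h1, h2]; omega
    · simp [h1]; omega
  have hkey : S'.card ≤ 3 * E.card := by
    apply Finset.card_le_mul_card_image_of_maps_to (fun j hj => (hmaps j hj).1)
    intro b hb
    have hsub2 : {a ∈ S' | f a = b} ⊆ Finset.Icc (b - 1) (b + 1) := by
      intro j hj
      simp only [Finset.mem_filter] at hj
      obtain ⟨hjS, hfj⟩ := hj
      obtain ⟨_, h2, h3⟩ := hmaps j hjS
      simp only [Finset.mem_Icc]
      omega
    calc {a ∈ S' | f a = b}.card ≤ (Finset.Icc (b - 1) (b + 1)).card :=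
          Finset.card_le_card hsub2
      _ ≤ 3 := by rw [Nat.card_Icc]; omega
  have hS2 : S.card ≤ S'.card + 2 := by
    have hsub3 : S ⊆ S' ∪ {1, n} := by
      intro j hj
      have hj' := hj
      simp only [hSdef, Finset.mem_filter, Finset.mem_Icc] at hj'
      by_cases h : 2 ≤ j ∧ j + 1 ≤ n
      · exact Finset.mem_union_left _ (Finset.mem_filter.2 ⟨hj, h⟩)
      · apply Finset.mem_union_right
        simp only [Finset.mem_insert, Finset.mem_singleton]
        omega
    calc S.card ≤ (S' ∪ {1, n}).card := Finset.card_le_card hsub3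
      _ ≤ S'.card + ({1, n} : Finset ℕ).card := Finset.card_union_le _ _
      _ ≤ S'.card + 2 := by
          have : ({1, n} : Finset ℕ).card ≤ 2 := Finset.card_insert_le _ _ |>.trans (by simp)
          omega
  omega
end

section
/- Fix n ≥ 1 and define the sequence R_{m,n} by R_{0,n} = 0, R_{1,n} = n, and R_{m,n} = R_{m-1,n} + n - ⌊(R_{m-1,n} - R_{m-2,n})/3⌋ for m ≥ 2. Then for every m ≥ 1 and every maximal configuration C on the m×n grid, |C| ≤ R_{m,n}. -/
/-!
If row `i` holds `a` houses and row `i + 1` holds `b`, then among the `a` houses of row `i` at most `2 (n - a) + 2` sit next to a gap or the boundary, and the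
others lie over empty lots of row `i + 1`; hence `3 a + b ≤ 3 n + 2`. Summing the rows from the
south, each new row `r` above a row `s` satisfies `r ≤ n - ⌊s / 3⌋`, and since `s - ⌊s / 3⌋` is
monotone in `s` the partial sums are dominated by `R`.
-/

open Finset

section RowInequality

variable {n : ℕ} {A B : Finset ℕ}

lemma card_filter_sub_one_notMem_le (hA : A ⊆ Icc 1 n) :
    #{j ∈ A | j - 1 ∉ A} ≤ n + 1 - #A := by
  have hA0 : A ⊆ Icc 0 n := hA.trans (Icc_subset_Icc (Nat.zero_le 1) le_rfl)
  calc #{j ∈ A | j - 1 ∉ A} ≤ #(Icc 0 n \ A) := by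
        refine card_le_card_of_injOn (· - 1) (fun j hj => ?_)
          (fun j hj k hk (h : j - 1 = k - 1) => ?_)
        · obtain ⟨hjA, hj1⟩ := mem_filter.1 hj
          have := mem_Icc.1 (hA hjA)
          exact mem_sdiff.2 ⟨mem_Icc.2 ⟨Nat.zero_le _, Nat.sub_le_of_le_add (by omega)⟩, hj1⟩
        · have := mem_Icc.1 (hA (mem_filter.1 hj).1)
          have := mem_Icc.1 (hA (mem_filter.1 hk).1)
          omega
    _ = n + 1 - #A := by rw [card_sdiff_of_subset hA0, Nat.card_Icc, Nat.sub_zero]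

lemma card_filter_add_one_notMem_le (hA : A ⊆ Icc 1 n) :
    #{j ∈ A | j + 1 ∉ A} ≤ n + 1 - #A := by
  have hA1 : A ⊆ Icc 1 (n + 1) := hA.trans (Icc_subset_Icc le_rfl (Nat.le_succ n))
  calc #{j ∈ A | j + 1 ∉ A} ≤ #(Icc 1 (n + 1) \ A) := by
        refine card_le_card_of_injOn (· + 1) (fun j hj => ?_)
          (fun j _ k _ h => Nat.succ_injective h)
        obtain ⟨hjA, hj1⟩ := mem_filter.1 hj
        have := mem_Icc.1 (hA hjA)
        exact mem_sdiff.2 ⟨mem_Icc.2 ⟨Nat.le_add_left 1 j, by simpa using this.2⟩, hj1⟩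
    _ = n + 1 - #A := by rw [card_sdiff_of_subset hA1, Nat.card_Icc, Nat.add_sub_cancel]

lemma three_mul_card_add_card_le (hA : A ⊆ Icc 1 n) (hB : B ⊆ Icc 1 n)
    (hAB : ∀ j ∈ A, j - 1 ∈ A → j + 1 ∈ A → j ∉ B) :
    3 * #A + #B ≤ 3 * n + 2 := by
  set I := {j ∈ A | j - 1 ∈ A ∧ j + 1 ∈ A}
  have hIB : #I + #B ≤ n := by
    have hdisj : Disjoint I B := disjoint_left.2 fun j hj =>
      let ⟨hjA, hl, hr⟩ := mem_filter.1 hj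
      hAB j hjA hl hr
    calc #I + #B = #(I ∪ B) := (card_union_of_disjoint hdisj).symm
      _ ≤ #(Icc 1 n) := card_le_card (union_subset ((filter_subset _ _).trans hA) hB)
      _ = n := by simp
  have hboundary : #{j ∈ A | ¬(j - 1 ∈ A ∧ j + 1 ∈ A)} ≤ 2 * (n + 1 - #A) := by
    calc #{j ∈ A | ¬(j - 1 ∈ A ∧ j + 1 ∈ A)}
        = #({j ∈ A | j - 1 ∉ A} ∪ {j ∈ A | j + 1 ∉ A}) := by
          simp only [not_and_or, filter_or]
      _ ≤ #{j ∈ A | j - 1 ∉ A} + #{j ∈ A | j + 1 ∉ A} := card_union_le _ _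
      _ ≤ 2 * (n + 1 - #A) := by
          have := card_filter_sub_one_notMem_le hA
          have := card_filter_add_one_notMem_le hA
          omega
  have hsplit : #I + #{j ∈ A | ¬(j - 1 ∈ A ∧ j + 1 ∈ A)} = #A :=
    card_filter_add_card_filter_not _
  have hAn : #A ≤ n := (card_le_card hA).trans (by simp)
  omega

end RowInequality

def rowCount (C : Finset (ℕ × ℕ)) (n i : ℕ) : ℕ :=
  #{j ∈ Icc 1 n | (i, j) ∈ C}

lemma rowCount_le (C : Finset (ℕ × ℕ)) (n i : ℕ) : rowCount C n i ≤ n :=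
  (card_filter_le _ _).trans (by simp)

lemma sum_Icc_one_eq_sum_range_sub {M : Type*} [AddCommMonoid M] (f : ℕ → M) (m : ℕ) :
    ∑ i ∈ Icc 1 m, f i = ∑ k ∈ range m, f (m - k) := by
  rw [range_eq_Ico, sum_Ico_reflect f 0 (Nat.le_succ m), Nat.sub_zero, Nat.add_sub_cancel_left]
  rfl

lemma card_eq_sum_rowCount {m n : ℕ} {C : Finset (ℕ × ℕ)} (hC : C ⊆ Grid m n) :
    #C = ∑ i ∈ Icc 1 m, rowCount C n i := by
  have hfilter : C = {p ∈ Grid m n | p ∈ C} := by rw [filter_mem_eq_inter, inter_eq_right.2 hC]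
  conv_lhs => rw [hfilter]
  simp only [rowCount, card_filter, Grid, sum_product]

lemma three_mul_rowCount_add_rowCount_succ_le {n : ℕ} {C : Finset (ℕ × ℕ)}
    (hC : ∀ p ∈ C, ¬ Blocked C p) (i : ℕ) :
    3 * rowCount C n i + rowCount C n (i + 1) ≤ 3 * n + 2 :=
  three_mul_card_add_card_le (filter_subset _ _) (filter_subset _ _) fun j hj hl hr hb =>
    hC (i, j) (mem_filter.1 hj).2 ⟨(mem_filter.1 hr).2, (mem_filter.1 hl).2, (mem_filter.1 hb).2⟩

section Recurrence

variable {n : ℕ} {R : ℕ → ℕ}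

lemma le_succ_le_add_of_rec (hR0 : R 0 = 0) (hR1 : R 1 = n)
    (hRrec : ∀ k : ℕ, R (k + 2) = R (k + 1) + n - (R (k + 1) - R k) / 3) (k : ℕ) :
    R k ≤ R (k + 1) ∧ R (k + 1) ≤ R k + n := by
  induction k with
  | zero => show R 0 ≤ R 1 ∧ R 1 ≤ R 0 + n; omega
  | succ k ih =>
    show R (k + 1) ≤ R (k + 2) ∧ R (k + 2) ≤ R (k + 1) + n
    have := hRrec k
    omega

lemma sum_range_le_of_rec (hR0 : R 0 = 0) (hR1 : R 1 = n)
    (hRrec : ∀ k : ℕ, R (k + 2) = R (k + 1) + n - (R (k + 1) - R k) / 3)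
    (r : ℕ → ℕ) (hr : ∀ k, r k ≤ n) (K : ℕ)
    (hstep : ∀ k, k + 1 < K → 3 * r (k + 1) + r k ≤ 3 * n + 2) :
    ∀ k ≤ K, ∑ j ∈ range k, r j ≤ R k := by
  have hpair : ∀ k, k + 1 ≤ K →
      ∑ j ∈ range k, r j ≤ R k ∧ ∑ j ∈ range (k + 1), r j ≤ R (k + 1) := by
    intro k
    induction k with
    | zero => simp [hR0, hR1, hr 0]
    | succ k ih =>
      intro hk
      obtain ⟨hSk, hSk1⟩ := ih (by omega)
      refine ⟨hSk1, ?_⟩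
      rw [sum_range_succ] at hSk1
      rw [sum_range_succ, sum_range_succ]
      show _ ≤ R (k + 2)
      have := hstep k hk
      have := hr (k + 1)
      have := hRrec k
      have := le_succ_le_add_of_rec hR0 hR1 hRrec k
      -- With `s = r k` and `d = R (k + 1) - R k`: if `s ≤ d` use `s - s / 3 ≤ d - d / 3`,
      -- otherwise use `∑_{j ≤ k} r j ≤ R (k + 1)` and `d / 3 ≤ s / 3`.
      omega
  intro k hk
  cases k with
  | zero => simp [hR0]
  | succ k => exact (hpair k hk).2

end Recurrence

theorem recur_upper_bound_general (n : ℕ) (R : ℕ → ℕ)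
    (hR0 : R 0 = 0) (hR1 : R 1 = n)
    (hRrec : ∀ k : ℕ, R (k + 2) = R (k + 1) + n - (R (k + 1) - R k) / 3)
    (m : ℕ) (C : Finset (ℕ × ℕ)) (hC : MaximalConfig m n C) :
    C.card ≤ R m := by
  obtain ⟨⟨hsub, hperm⟩, -⟩ := hC
  have hstep : ∀ k, k + 1 < m →
      3 * rowCount C n (m - (k + 1)) + rowCount C n (m - k) ≤ 3 * n + 2 := fun k hk => by
    simpa only [show m - (k + 1) + 1 = m - k by omega] using
      three_mul_rowCount_add_rowCount_succ_le hperm (m - (k + 1))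
  calc #C = ∑ i ∈ Icc 1 m, rowCount C n i := card_eq_sum_rowCount hsub
    _ = ∑ k ∈ range m, rowCount C n (m - k) := sum_Icc_one_eq_sum_range_sub _ m
    _ ≤ R m := sum_range_le_of_rec hR0 hR1 hRrec (fun k => rowCount C n (m - k))
      (fun _ => rowCount_le C n _) m hstep m le_rfl

/-- Improved upper bound on E_{m,n}: for R defined by R 0 = 0, R 1 = n and
R m = R (m-1) + n - ⌊(R (m-1) - R (m-2))/3⌋ for m ≥ 2, every maximal
configuration on the m×n grid (m ≥ 1) has |C| ≤ R m. -/
theorem recur_upper_bound (n : ℕ) (hn : 1 ≤ n) (R : ℕ → ℕ)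
    (hR0 : R 0 = 0) (hR1 : R 1 = n)
    (hRrec : ∀ k : ℕ, R (k + 2) = R (k + 1) + n - (R (k + 1) - R k) / 3)
    (m : ℕ) (hm : 1 ≤ m) (C : Finset (ℕ × ℕ)) (hC : MaximalConfig m n C) :
    C.card ≤ R m :=
  recur_upper_bound_general n R hR0 hR1 hRrec m C hC
end

section
/- Let m ≥ 2, n ≥ 1, and let C be any permissible configuration on the m×n grid. Setting S = {2,…,m}×[n] (all rows except the first) and T = {3,…,m}×[n] (all rows except the first two; T is empty if m = 2), one has |C| ≤ n + ⌈(|C ∩ T| + 2|C ∩ S|)/3⌉. -/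
/-- For any permissible configuration on the m×n grid (m ≥ 2, n ≥ 1), with
S = {2,…,m}×[n] and T = {3,…,m}×[n], one has
|C| ≤ n + ⌈(|C ∩ T| + 2|C ∩ S|)/3⌉ (the natural-number ceiling ⌈x/3⌉ being
(x+2)/3). -/
theorem card_le_n_add_ceil (m n : ℕ) (hm : 2 ≤ m) (hn : 1 ≤ n)
    (C : Finset (ℕ × ℕ)) (hC : Permissible m n C) :
    C.card ≤ n +
      ((C ∩ (Finset.Icc 3 m ×ˢ Finset.Icc 1 n)).card +
        2 * (C ∩ (Finset.Icc 2 m ×ˢ Finset.Icc 1 n)).card + 2) / 3 := by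
  classical
  obtain ⟨hsub, hperm⟩ := hC
  have hmem : ∀ p ∈ C, 1 ≤ p.1 ∧ p.1 ≤ m ∧ 1 ≤ p.2 ∧ p.2 ≤ n := by
    intro p hp
    have := hsub hp
    simp only [Grid, Finset.mem_product, Finset.mem_Icc] at this
    exact ⟨this.1.1, this.1.2, this.2.1, this.2.2⟩
  -- rewrite the intersections as filters
  have hS : C ∩ (Finset.Icc 2 m ×ˢ Finset.Icc 1 n) = C.filter (fun p => 2 ≤ p.1) := by
    ext p
    simp only [Finset.mem_inter, Finset.mem_filter, Finset.mem_product, Finset.mem_Icc]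
    constructor
    · rintro ⟨hp, ⟨h2, _⟩, _⟩; exact ⟨hp, h2⟩
    · rintro ⟨hp, h2⟩; have := hmem p hp; exact ⟨hp, ⟨h2, this.2.1⟩, this.2.2.1, this.2.2.2⟩
  have hT : C ∩ (Finset.Icc 3 m ×ˢ Finset.Icc 1 n) = C.filter (fun p => 3 ≤ p.1) := by
    ext p
    simp only [Finset.mem_inter, Finset.mem_filter, Finset.mem_product, Finset.mem_Icc]
    constructor
    · rintro ⟨hp, ⟨h2, _⟩, _⟩; exact ⟨hp, h2⟩
    · rintro ⟨hp, h2⟩; have := hmem p hp; exact ⟨hp, ⟨h2, this.2.1⟩, this.2.2.1, this.2.2.2⟩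
  -- row counts
  set r1 := (C.filter (fun p => p.1 = 1)).card with hr1
  set r2 := (C.filter (fun p => p.1 = 2)).card with hr2
  have hCsplit : C.card = r1 + (C.filter (fun p => 2 ≤ p.1)).card := by
    have : C = C.filter (fun p => p.1 = 1) ∪ C.filter (fun p => 2 ≤ p.1) := by
      ext p
      simp only [Finset.mem_union, Finset.mem_filter]
      constructor
      · intro hp
        have h := hmem p hp
        rcases Nat.lt_or_ge p.1 2 with h' | h'
        · exact Or.inl ⟨hp, by omega⟩
        · exact Or.inr ⟨hp, h'⟩
      · rintro (h | h) <;> exact h.1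
    rw [hr1, ← Finset.card_union_of_disjoint, ← this]
    rw [Finset.disjoint_left]
    intro p hp hq
    simp only [Finset.mem_filter] at hp hq
    omega
  have hSsplit : (C.filter (fun p => 2 ≤ p.1)).card
      = r2 + (C.filter (fun p => 3 ≤ p.1)).card := by
    have : C.filter (fun p => 2 ≤ p.1)
        = C.filter (fun p => p.1 = 2) ∪ C.filter (fun p => 3 ≤ p.1) := by
      ext p
      simp only [Finset.mem_union, Finset.mem_filter]
      constructor
      · rintro ⟨hp, h⟩
        rcases Nat.lt_or_ge p.1 3 with h' | h'
        · exact Or.inl ⟨hp, by omega⟩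
        · exact Or.inr ⟨hp, h'⟩
      · rintro (⟨hp, h⟩ | ⟨hp, h⟩) <;> exact ⟨hp, by omega⟩
    rw [this, Finset.card_union_of_disjoint, hr2]
    rw [Finset.disjoint_left]
    intro p hp hq
    simp only [Finset.mem_filter] at hp hq
    omega
  -- rows 1 and 2 as column sets
  set A : Finset ℕ := (Finset.Icc 1 n).filter (fun j => (1, j) ∈ C) with hA
  set B : Finset ℕ := (Finset.Icc 1 n).filter (fun j => (2, j) ∈ C) with hB
  have hr1A : r1 = A.card := by
    apply Finset.card_bij (fun p _ => p.2)
    · intro p hp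
      simp only [Finset.mem_filter] at hp
      have := hmem p hp.1
      simp only [hA, Finset.mem_filter, Finset.mem_Icc]
      refine ⟨⟨this.2.2.1, this.2.2.2⟩, ?_⟩
      have h : p = (1, p.2) := by rw [Prod.ext_iff]; exact ⟨hp.2, rfl⟩
      rw [← h]; exact hp.1
    · intro p hp q hq h
      simp only [Finset.mem_filter] at hp hq
      exact Prod.ext (hp.2.trans hq.2.symm) h
    · intro j hj
      simp only [hA, Finset.mem_filter, Finset.mem_Icc] at hj
      exact ⟨(1, j), Finset.mem_filter.2 ⟨hj.2, rfl⟩, rfl⟩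
  have hr2B : r2 = B.card := by
    apply Finset.card_bij (fun p _ => p.2)
    · intro p hp
      simp only [Finset.mem_filter] at hp
      have := hmem p hp.1
      simp only [hB, Finset.mem_filter, Finset.mem_Icc]
      refine ⟨⟨this.2.2.1, this.2.2.2⟩, ?_⟩
      have h : p = (2, p.2) := by rw [Prod.ext_iff]; exact ⟨hp.2, rfl⟩
      rw [← h]; exact hp.1
    · intro p hp q hq h
      simp only [Finset.mem_filter] at hp hq
      exact Prod.ext (hp.2.trans hq.2.symm) h
    · intro j hj
      simp only [hB, Finset.mem_filter, Finset.mem_Icc] at hj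
      exact ⟨(2, j), Finset.mem_filter.2 ⟨hj.2, rfl⟩, rfl⟩
  -- the key combinatorial bound: B.card + 3 * A.card ≤ 3 * n + 2
  have hAcard : A.card ≤ n := by
    calc A.card ≤ (Finset.Icc 1 n).card := Finset.card_le_card (Finset.filter_subset _ _)
    _ = n := by rw [Nat.card_Icc]; omega
  have hblock : ∀ j, j ∈ A → j + 1 ∈ A → j - 1 ∈ A → j ∉ B := by
    intro j hjA hj1A hj2A hjB
    simp only [hA, hB, Finset.mem_filter, Finset.mem_Icc] at hjA hj1A hj2A hjB
    exact hperm (1, j) hjA.2 ⟨hj1A.2, hj2A.2, hjB.2⟩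
  set B' : Finset ℕ := B \ {1, n} with hB'
  set g : ℕ → ℕ := fun j => if j - 1 ∉ A then j - 1 else if j ∉ A then j else j + 1 with hg
  have hgB' : ∀ j ∈ B', g j ∈ (Finset.Icc 1 n) \ A ∧ (g j = j - 1 ∨ g j = j ∨ g j = j + 1) := by
    intro j hj
    simp only [hB', Finset.mem_sdiff, Finset.mem_insert, Finset.mem_singleton] at hj
    have hjn : 1 ≤ j ∧ j ≤ n := by
      have := hj.1
      simp only [hB, Finset.mem_filter, Finset.mem_Icc] at this
      exact this.1
    have hj2 : 2 ≤ j := by omega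
    have hjn1 : j + 1 ≤ n := by omega
    simp only [hg]
    by_cases h1 : j - 1 ∈ A
    · simp only [h1, not_true, if_false]
      by_cases h2 : j ∈ A
      · simp only [h2, not_true, if_false]
        have h3 : j + 1 ∉ A := by
          intro h3
          exact hblock j h2 h3 h1 hj.1
        refine ⟨Finset.mem_sdiff.2 ⟨Finset.mem_Icc.2 ⟨by omega, hjn1⟩, h3⟩, by tauto⟩
      · simp only [h2, not_false_iff, if_true]
        refine ⟨Finset.mem_sdiff.2 ⟨Finset.mem_Icc.2 ⟨by omega, by omega⟩, h2⟩, by tauto⟩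
    · simp only [h1, not_false_iff, if_true]
      refine ⟨Finset.mem_sdiff.2 ⟨Finset.mem_Icc.2 ⟨by omega, by omega⟩, h1⟩, by tauto⟩
  have hB'card : B'.card ≤ 3 * ((Finset.Icc 1 n) \ A).card := by
    apply Finset.card_le_mul_card_image_of_maps_to (fun j hj => (hgB' j hj).1)
    intro c hc
    calc (B'.filter (fun j => g j = c)).card
        ≤ ({c - 1, c, c + 1} : Finset ℕ).card := by
          apply Finset.card_le_card
          intro j hj
          simp only [Finset.mem_filter] at hj
          have h := (hgB' j hj.1).2
          have hj2 : 2 ≤ j := by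
            have := hj.1
            simp only [hB', Finset.mem_sdiff, Finset.mem_insert, Finset.mem_singleton,
              hB, Finset.mem_filter, Finset.mem_Icc] at this
            omega
          simp only [Finset.mem_insert, Finset.mem_singleton]
          omega
      _ ≤ 3 := by
          have h1 := Finset.card_insert_le (c - 1) ({c, c + 1} : Finset ℕ)
          have h2 := Finset.card_insert_le c ({c + 1} : Finset ℕ)
          have h3 : ({c + 1} : Finset ℕ).card = 1 := Finset.card_singleton _
          omega
  have hsdA : ((Finset.Icc 1 n) \ A).card = n - A.card := by
    rw [Finset.card_sdiff_of_subset, Nat.card_Icc]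
    · omega
    · intro j hj
      simp only [hA, Finset.mem_filter] at hj
      exact hj.1
  have hBB' : B.card ≤ B'.card + 2 := by
    have : B ⊆ B' ∪ {1, n} := by
      intro j hj
      simp only [hB', Finset.mem_union, Finset.mem_sdiff]
      by_cases h : j ∈ ({1, n} : Finset ℕ)
      · exact Or.inr h
      · exact Or.inl ⟨hj, h⟩
    calc B.card ≤ (B' ∪ {1, n}).card := Finset.card_le_card this
      _ ≤ B'.card + ({1, n} : Finset ℕ).card := Finset.card_union_le _ _
      _ ≤ B'.card + 2 := by
          have h1 := Finset.card_insert_le 1 ({n} : Finset ℕ)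
          have h2 : ({n} : Finset ℕ).card = 1 := Finset.card_singleton _
          omega
  have hkey : B.card + 3 * A.card ≤ 3 * n + 2 := by
    have := hB'card
    rw [hsdA] at this
    omega
  -- final arithmetic
  rw [hS, hT, hCsplit, hSsplit, hr1A, hr2B]
  set t := (C.filter (fun p => 3 ≤ p.1)).card
  omega
end

section
/- Fix n ≥ 2 and define the sequence R_{m,n} by R_{0,n} = 0, R_{1,n} = n, and R_{m,n} = R_{m-1,n} + n - ⌊(R_{m-1,n} - R_{m-2,n})/3⌋ for m ≥ 2. Then for all m ≥ 2: R_{m,n} ≤ mn - ⌊n/4⌋·(m-1) when n ≢ 3 (mod 4), and R_{m,n} ≤ mn - ⌊n/4⌋·(m-1) - ⌊m/2⌋ when n ≡ 3 (mod 4). -/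
/-- difference sequence: `dd n k = R (k+1) - R k`. -/
private def dd (n : ℕ) : ℕ → ℕ
  | 0 => n
  | k + 1 => n - dd n k / 3

/-- For n ≥ 2 and R defined by R 0 = 0, R 1 = n and
R m = R (m-1) + n - ⌊(R (m-1) - R (m-2))/3⌋ (m ≥ 2): for all m ≥ 2,
R m ≤ mn - ⌊n/4⌋(m-1) when n ≢ 3 (mod 4), and
R m ≤ mn - ⌊n/4⌋(m-1) - ⌊m/2⌋ when n ≡ 3 (mod 4). -/
theorem recur_le_old_bound (n : ℕ) (hn : 2 ≤ n) (R : ℕ → ℕ)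
    (hR0 : R 0 = 0) (hR1 : R 1 = n)
    (hRrec : ∀ k : ℕ, R (k + 2) = R (k + 1) + n - (R (k + 1) - R k) / 3)
    (m : ℕ) (hm : 2 ≤ m) :
    (n % 4 ≠ 3 → R m ≤ m * n - n / 4 * (m - 1)) ∧
    (n % 4 = 3 → R m ≤ m * n - n / 4 * (m - 1) - m / 2) := by
  -- Step 1: identify the differences and show they stay ≤ n.
  have hdd : ∀ k, R (k + 1) = R k + dd n k ∧ dd n k ≤ n := by
    intro k
    induction k with
    | zero => simp [dd, hR0, hR1]
    | succ k ih =>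
      obtain ⟨h1, h2⟩ := ih
      have h3 := hRrec k
      have h4 : dd n (k + 1) = n - dd n k / 3 := rfl
      have h5 : dd n k / 3 ≤ dd n k := Nat.div_le_self _ _
      have h6 : R (k + 1) - R k = dd n k := by omega
      rw [h6] at h3
      have h7 : dd n k / 3 ≤ n := le_trans h5 h2
      have h8 : R (k + 1) + n - dd n k / 3 = R (k + 1) + (n - dd n k / 3) := by omega
      rw [h8, ← h4] at h3
      exact ⟨h3, by rw [h4]; omega⟩
  -- Step 2: the recurrence for differences, over ℤ.
  have hE : ∀ k, (dd n (k + 1) : ℤ) = (n : ℤ) - (dd n k : ℤ) / 3 := by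
    intro k
    have h4 : dd n (k + 1) = n - dd n k / 3 := rfl
    have h2 := (hdd k).2
    omega
  set c : ℤ := if n % 4 = 3 then 1 else 0 with hc
  have hcc : (n % 4 = 3 ∧ c = 1) ∨ (n % 4 ≠ 3 ∧ c = 0) := by
    by_cases h : n % 4 = 3 <;> simp [hc, h]
  -- Step 3: main two-step induction.
  have key : ∀ j : ℕ, (R (2 * j + 1) : ℤ) ≤ (2 * j + 1) * n - (n / 4 : ℕ) * (2 * j) - c * j ∧
      (dd n (2 * j + 1) : ℤ) ≤ (n : ℤ) - (n / 4 : ℕ) - c := by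
    intro j
    induction j with
    | zero =>
      have h0 : dd n 0 = n := rfl
      have h1 : (dd n 1 : ℤ) = (n : ℤ) - (dd n 0 : ℤ) / 3 := hE 0
      rw [h0] at h1
      have hg1 : 2 * 0 + 1 = 1 := rfl
      rw [hg1, hR1]
      rcases hcc with ⟨h, hc1⟩ | ⟨h, hc1⟩ <;> rw [hc1] <;> push_cast <;> omega
    | succ j ih =>
      obtain ⟨ih1, ih2⟩ := ih
      have e1 : (dd n (2 * j + 2) : ℤ) = (n : ℤ) - (dd n (2 * j + 1) : ℤ) / 3 := hE (2 * j + 1)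
      have e2 : (dd n (2 * j + 3) : ℤ) = (n : ℤ) - (dd n (2 * j + 2) : ℤ) / 3 := hE (2 * j + 2)
      have r1 : R (2 * j + 2) = R (2 * j + 1) + dd n (2 * j + 1) := (hdd (2 * j + 1)).1
      have r2 : R (2 * j + 3) = R (2 * j + 2) + dd n (2 * j + 2) := (hdd (2 * j + 2)).1
      have r1' : (R (2 * j + 2) : ℤ) = (R (2 * j + 1) : ℤ) + (dd n (2 * j + 1) : ℤ) := by
        exact_mod_cast congrArg (Nat.cast : ℕ → ℤ) r1
      have r2' : (R (2 * j + 3) : ℤ) = (R (2 * j + 2) : ℤ) + (dd n (2 * j + 2) : ℤ) := by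
        exact_mod_cast congrArg (Nat.cast : ℕ → ℤ) r2
      have hidx1 : 2 * (j + 1) + 1 = 2 * j + 3 := by ring
      rw [hidx1]
      have hb : (0 : ℤ) ≤ (dd n (2 * j + 1) : ℤ) := Int.natCast_nonneg _
      have hb2 : (0 : ℤ) ≤ (dd n (2 * j + 2) : ℤ) := Int.natCast_nonneg _
      -- pair bound and next odd-difference bound, all linear facts for omega
      have f1 : (dd n (2 * j + 1) : ℤ) + (dd n (2 * j + 2) : ℤ)
          ≤ 2 * ((n : ℤ) - (n / 4 : ℕ)) - c := by
        rcases hcc with ⟨h, hc1⟩ | ⟨h, hc1⟩ <;> rw [hc1] at ih2 ⊢ <;> omega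
      have f2 : (dd n (2 * j + 3) : ℤ) ≤ (n : ℤ) - (n / 4 : ℕ) - c := by
        rcases hcc with ⟨h, hc1⟩ | ⟨h, hc1⟩ <;> rw [hc1] at ih2 ⊢ <;> omega
      refine ⟨?_, f2⟩
      push_cast
      push_cast at ih1 f1 r1' r2'
      linarith
  -- Step 4: assemble, splitting on parity of m.
  have main : (R m : ℤ) ≤ m * n - (n / 4 : ℕ) * (m - 1 : ℕ) - c * (m / 2 : ℕ) := by
    rcases Nat.even_or_odd m with ⟨j, hj⟩ | ⟨j, hj⟩
    · -- m = 2j, j ≥ 1; write m = 2(j-1)+2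
      obtain ⟨i, hi⟩ : ∃ i, j = i + 1 := ⟨j - 1, by omega⟩
      have hm2 : m = 2 * i + 2 := by omega
      obtain ⟨k1, k2⟩ := key i
      have r1 := (hdd (2 * i + 1)).1
      have r1' : (R (2 * i + 2) : ℤ) = (R (2 * i + 1) : ℤ) + (dd n (2 * i + 1) : ℤ) := by
        exact_mod_cast congrArg (Nat.cast : ℕ → ℤ) r1
      rw [hm2]
      have h1 : (2 * i + 2) / 2 = i + 1 := by omega
      have h2 : 2 * i + 2 - 1 = 2 * i + 1 := by omega
      rw [h1, h2]
      push_cast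
      push_cast at k1 k2 r1'
      linarith
    · -- m = 2j+1, j ≥ 1
      obtain ⟨k1, k2⟩ := key j
      have hm2 : m = 2 * j + 1 := by omega
      rw [hm2]
      have h1 : (2 * j + 1) / 2 = j := by omega
      have h2 : 2 * j + 1 - 1 = 2 * j := by omega
      rw [h1, h2]
      push_cast
      push_cast at k1
      linarith
  constructor
  · intro h
    rcases hcc with ⟨h3, _⟩ | ⟨_, hc1⟩
    · exact absurd h3 h
    · rw [hc1] at main
      have hq : n / 4 * (m - 1) ≤ m * n := by
        have h5 : n / 4 ≤ n := Nat.div_le_self _ _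
        calc n / 4 * (m - 1) ≤ n * m := Nat.mul_le_mul h5 (Nat.sub_le _ _)
          _ = m * n := by ring
      zify [hq]
      push_cast at main
      linarith
  · intro h
    rcases hcc with ⟨_, hc1⟩ | ⟨h3, _⟩
    · rw [hc1] at main
      have hq1 : n / 4 * (m - 1) ≤ (n - 1) * (m - 1) := by
        apply Nat.mul_le_mul_right
        omega
      have hq2 : (n - 1) * (m - 1) + m ≤ m * n := by
        have e1 : n - 1 + 1 = n := by omega
        have e2 : m - 1 + 1 = m := by omega
        nlinarith [e1, e2]
      have hq : n / 4 * (m - 1) ≤ m * n := by omega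
      have hq' : m / 2 ≤ m * n - n / 4 * (m - 1) := by
        have h5 : m / 2 ≤ m := Nat.div_le_self _ _
        omega
      zify [hq, hq']
      push_cast at main
      linarith
    · exact absurd h h3
end

section
/- Let C ⊆ ℤ² be a maximal configuration on the infinite grid, and suppose the building density D(C) = lim_{n→∞} |C ∩ ([-n,n]×[-n,n])| / (2n+1)² exists and equals d. Then 1/2 ≤ d ≤ 3/4. -/
/-!
Let `H n` and `E n` count the houses and the empty lots in `[-n, n]²`. If a lot `p` of a maximal
configuration is empty, adding a house at `p` must block someone, so `p` has a house to its west,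
two houses to its east, or three houses in the row north of it. Taking that west, east or north
house injects the empty lots of `[-n, n]²` into the houses of `[-n-1, n+1]²`, so
`E n ≤ H (n + 1)`. Conversely, an unblocked house has an empty lot to its west, east or south;
this map from the houses of `[-n, n]²` to the empty lots of `[-n-1, n+1]²` is at most
three-to-one, so `H n ≤ 3 E (n + 1)`. Since `H n + E n = (2n + 1)²` and `H n / (2n + 1)² → d`,
these give `1 ≤ 2d` and `4d ≤ 3`.
-/

/-- A house at `p ∈ ℤ²` is blocked if its eastern, western and southern
neighbours are all occupied (rows increase towards the south). -/
def BlockedZ (C : Set (ℤ × ℤ)) (p : ℤ × ℤ) : Prop :=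
  (p.1, p.2 + 1) ∈ C ∧ (p.1, p.2 - 1) ∈ C ∧ (p.1 + 1, p.2) ∈ C

/-- A configuration on ℤ² is permissible if no house in it is blocked. -/
def PermissibleZ (C : Set (ℤ × ℤ)) : Prop := ∀ p ∈ C, ¬ BlockedZ C p

/-- A configuration on ℤ² is maximal if it is permissible and no permissible
configuration strictly contains it. -/
def MaximalZ (C : Set (ℤ × ℤ)) : Prop :=
  PermissibleZ C ∧ ∀ D : Set (ℤ × ℤ), PermissibleZ D → C ⊆ D → D = C

open Finset Filter Topology

section Configurations

variable {C : Set (ℤ × ℤ)}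

theorem MaximalZ.not_permissibleZ_insert (hC : MaximalZ C) {p : ℤ × ℤ} (hp : p ∉ C) :
    ¬ PermissibleZ (insert p C) := fun h =>
  hp (hC.2 _ h (Set.subset_insert p C) ▸ Set.mem_insert p C)

/-- Otherwise `insert (i, j) C` would be permissible: only `(i, j)` and its west, east and north
neighbours can become blocked. -/
theorem MaximalZ.west_or_east_or_north (hC : MaximalZ C) {i j : ℤ} (hp : (i, j) ∉ C) :
    (i, j - 1) ∈ C ∨ ((i, j + 1) ∈ C ∧ (i, j + 2) ∈ C) ∨
      ((i - 1, j) ∈ C ∧ (i - 1, j - 1) ∈ C ∧ (i - 1, j + 1) ∈ C) := by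
  by_contra! h
  obtain ⟨hW, hE, hN⟩ := h
  refine hC.not_permissibleZ_insert hp ?_
  rintro ⟨a, b⟩ hq ⟨h1, h2, h3⟩
  simp only [Set.mem_insert_iff, Prod.mk.injEq] at hq h1 h2 h3
  have hab := hC.1 (a, b)
  simp only [BlockedZ] at hab
  grind

open scoped Classical in
noncomputable def emptyToHouse (C : Set (ℤ × ℤ)) : ℤ × ℤ → ℤ × ℤ
  | (i, j) =>
    if (i, j - 1) ∈ C then (i, j - 1)
    else if (i, j + 1) ∈ C ∧ (i, j + 2) ∈ C then (i, j + 1)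
    else (i - 1, j)

theorem emptyToHouse_mem (hC : MaximalZ C) {p : ℤ × ℤ} (hp : p ∉ C) :
    emptyToHouse C p ∈ C := by
  obtain ⟨i, j⟩ := p
  have := hC.west_or_east_or_north hp
  simp only [emptyToHouse]
  split_ifs <;> tauto

/-- A common image would force one of the two lots to be occupied: e.g. `(i, j - 1) = (k, l + 1)`
puts `(i, j) = (k, l + 2)` in `C`. -/
theorem emptyToHouse_injOn (hC : MaximalZ C) : Set.InjOn (emptyToHouse C) Cᶜ := by
  rintro ⟨i, j⟩ (hp : _ ∉ C) ⟨k, l⟩ (hq : _ ∉ C) h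
  have := hC.west_or_east_or_north hp
  have := hC.west_or_east_or_north hq
  simp only [emptyToHouse] at h
  split_ifs at h <;> grind

theorem emptyToHouse_eq (p : ℤ × ℤ) :
    emptyToHouse C p = (p.1, p.2 - 1) ∨ emptyToHouse C p = (p.1, p.2 + 1) ∨
      emptyToHouse C p = (p.1 - 1, p.2) := by
  obtain ⟨i, j⟩ := p
  simp only [emptyToHouse]
  split_ifs <;> simp

open scoped Classical in
noncomputable def houseToEmpty (C : Set (ℤ × ℤ)) : ℤ × ℤ → ℤ × ℤ
  | (i, j) =>
    if (i, j - 1) ∉ C then (i, j - 1)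
    else if (i, j + 1) ∉ C then (i, j + 1)
    else (i + 1, j)

theorem houseToEmpty_not_mem (hC : PermissibleZ C) {p : ℤ × ℤ} (hp : p ∈ C) :
    houseToEmpty C p ∉ C := by
  obtain ⟨i, j⟩ := p
  have := hC _ hp
  simp only [houseToEmpty, BlockedZ] at *
  split_ifs <;> tauto

theorem houseToEmpty_eq (p : ℤ × ℤ) :
    houseToEmpty C p = (p.1, p.2 - 1) ∨ houseToEmpty C p = (p.1, p.2 + 1) ∨
      houseToEmpty C p = (p.1 + 1, p.2) := by
  obtain ⟨i, j⟩ := p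
  simp only [houseToEmpty]
  split_ifs <;> simp

noncomputable def square (n : ℕ) : Finset (ℤ × ℤ) :=
  Finset.Icc (-(n : ℤ)) n ×ˢ Finset.Icc (-(n : ℤ)) n

theorem mem_square {n : ℕ} {p : ℤ × ℤ} :
    p ∈ square n ↔ -(n : ℤ) ≤ p.1 ∧ p.1 ≤ n ∧ -(n : ℤ) ≤ p.2 ∧ p.2 ≤ n := by
  simp [square, and_assoc]

theorem card_square (n : ℕ) : #(square n) = (2 * n + 1) ^ 2 := by
  rw [square, card_product, Int.card_Icc, ← sq]
  congr
  omega

theorem mem_square_succ {n : ℕ} {p q : ℤ × ℤ} (hp : p ∈ square n)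
    (h₁ : |q.1 - p.1| ≤ 1) (h₂ : |q.2 - p.2| ≤ 1) : q ∈ square (n + 1) := by
  rw [mem_square] at hp ⊢
  rw [abs_le] at h₁ h₂
  push_cast
  omega

theorem emptyToHouse_mem_square_succ {n : ℕ} {p : ℤ × ℤ} (hp : p ∈ square n) :
    emptyToHouse C p ∈ square (n + 1) := by
  rcases emptyToHouse_eq (C := C) p with h | h | h <;>
    exact mem_square_succ hp (by simp [h]) (by simp [h])

theorem houseToEmpty_mem_square_succ {n : ℕ} {p : ℤ × ℤ} (hp : p ∈ square n) :
    houseToEmpty C p ∈ square (n + 1) := by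
  rcases houseToEmpty_eq (C := C) p with h | h | h <;>
    exact mem_square_succ hp (by simp [h]) (by simp [h])

open scoped Classical in
noncomputable def houses (C : Set (ℤ × ℤ)) (n : ℕ) : Finset (ℤ × ℤ) := {p ∈ square n | p ∈ C}

open scoped Classical in
noncomputable def emptyLots (C : Set (ℤ × ℤ)) (n : ℕ) : Finset (ℤ × ℤ) := {p ∈ square n | p ∉ C}

theorem card_houses_add_card_emptyLots (C : Set (ℤ × ℤ)) (n : ℕ) :
    #(houses C n) + #(emptyLots C n) = (2 * n + 1) ^ 2 := by
  rw [houses, emptyLots, card_filter_add_card_filter_not, card_square]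

theorem ncard_inter_Icc_prod_Icc (C : Set (ℤ × ℤ)) (n : ℕ) :
    (C ∩ (Set.Icc (-(n : ℤ)) n ×ˢ Set.Icc (-(n : ℤ)) n)).ncard = #(houses C n) := by
  rw [← Set.ncard_coe_finset]
  congr 1
  ext p
  simp only [houses, square, coe_filter, mem_product, mem_Icc, Set.mem_inter_iff, Set.mem_prod,
    Set.mem_Icc, Set.mem_ofPred_eq]
  tauto

theorem MaximalZ.card_emptyLots_le (hC : MaximalZ C) (n : ℕ) :
    #(emptyLots C n) ≤ #(houses C (n + 1)) := by
  classical
  refine card_le_card_of_injOn (emptyToHouse C) (fun p hp => ?_) ?_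
  · simp only [emptyLots, houses, coe_filter, Set.mem_ofPred_eq] at hp ⊢
    exact ⟨emptyToHouse_mem_square_succ hp.1, emptyToHouse_mem hC hp.2⟩
  · exact (emptyToHouse_injOn hC).mono fun p hp => (mem_filter.1 hp).2

theorem PermissibleZ.card_houses_le (hC : PermissibleZ C) (n : ℕ) :
    #(houses C n) ≤ 3 * #(emptyLots C (n + 1)) := by
  classical
  refine card_le_mul_card_image_of_maps_to (f := houseToEmpty C) (fun p hp => ?_) 3 fun b _ => ?_
  · simp only [emptyLots, houses, mem_filter] at hp ⊢
    exact ⟨houseToEmpty_mem_square_succ hp.1, houseToEmpty_not_mem hC hp.2⟩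
  · calc #{p ∈ houses C n | houseToEmpty C p = b}
        ≤ #{(b.1, b.2 + 1), (b.1, b.2 - 1), (b.1 - 1, b.2)} := by
          refine card_le_card fun p hp => ?_
          obtain ⟨-, rfl⟩ := mem_filter.1 hp
          rcases houseToEmpty_eq (C := C) p with h | h | h <;> simp [h]
      _ ≤ 3 := card_le_three

end Configurations

theorem tendsto_odd_succ_div_odd_sq :
    Tendsto (fun n : ℕ => ((2 * n + 3 : ℝ) / (2 * n + 1)) ^ 2) atTop (𝓝 1) := by
  simpa [add_comm] using (tendsto_add_mul_div_add_mul_atTop_nhds (3 : ℝ) 1 2 two_ne_zero).pow 2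

theorem Filter.Tendsto.comp_succ_div_sq_odd {x : ℕ → ℝ} {d : ℝ}
    (hx : Tendsto (fun n : ℕ => x n / (2 * n + 1) ^ 2) atTop (𝓝 d)) :
    Tendsto (fun n : ℕ => x (n + 1) / (2 * n + 1) ^ 2) atTop (𝓝 d) := by
  have key := (hx.comp (tendsto_add_atTop_nat 1)).mul tendsto_odd_succ_div_odd_sq
  rw [mul_one] at key
  refine key.congr fun n => ?_
  simp only [Function.comp_apply, Nat.cast_add, Nat.cast_one]
  field_simp
  ring

theorem half_le_and_le_three_quarters {a : ℕ → ℕ} {d : ℝ}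
    (hd : Tendsto (fun n : ℕ => (a n : ℝ) / (2 * n + 1) ^ 2) atTop (𝓝 d))
    (hlow : ∀ n, (2 * n + 1) ^ 2 ≤ a n + a (n + 1))
    (hup : ∀ n, a n + 3 * a (n + 1) ≤ 3 * (2 * n + 3) ^ 2) :
    1 / 2 ≤ d ∧ d ≤ 3 / 4 := by
  have hd' := hd.comp_succ_div_sq_odd
  have hpos (n : ℕ) : (0 : ℝ) < (2 * n + 1) ^ 2 := by positivity
  constructor
  · have h := ge_of_tendsto' (hd.add hd') fun n => by
      rw [← add_div, le_div_iff₀ (hpos n), one_mul]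
      exact_mod_cast hlow n
    linarith
  · have h := le_of_tendsto_of_tendsto' (hd.add (hd'.const_mul 3))
      (tendsto_odd_succ_div_odd_sq.const_mul 3) fun n => by
      rw [div_pow, mul_div_assoc', mul_div_assoc', ← add_div, div_le_div_iff_of_pos_right (hpos n)]
      exact_mod_cast hup n
    linarith

/-- If a maximal configuration on ℤ² has a building density d (the limit of
|C ∩ [-n,n]²|/(2n+1)² as n → ∞), then 1/2 ≤ d ≤ 3/4. -/
theorem density_bounds (C : Set (ℤ × ℤ)) (hC : MaximalZ C) (d : ℝ)
    (hd : Filter.Tendsto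
      (fun n : ℕ =>
        ((C ∩ (Set.Icc (-(n : ℤ)) (n : ℤ) ×ˢ Set.Icc (-(n : ℤ)) (n : ℤ))).ncard : ℝ) /
          (2 * (n : ℝ) + 1) ^ 2)
      Filter.atTop (nhds d)) :
    1 / 2 ≤ d ∧ d ≤ 3 / 4 := by
  simp only [ncard_inter_Icc_prod_Icc] at hd
  refine half_le_and_le_three_quarters hd (fun n => ?_) (fun n => ?_)
  · have hsum := card_houses_add_card_emptyLots C n
    have hinj := hC.card_emptyLots_le n
    omega
  · have hsum := card_houses_add_card_emptyLots C (n + 1)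
    have hfib := hC.1.card_houses_le n
    have hsq : (2 * (n + 1) + 1) ^ 2 = (2 * n + 3) ^ 2 := by ring
    omega
end

section
/- If C is any maximal configuration on the m×n grid with m,n ≥ 2, then the south-west corner lot (m,1) and the south-east corner lot (m,n) are both occupied, i.e. (m,1) ∈ C and (m,n) ∈ C. -/
/-- In any maximal configuration on the m×n grid (m,n ≥ 2), the south-west
corner (m,1) and the south-east corner (m,n) are occupied. -/
theorem southern_corners_occupied (m n : ℕ) (hm : 2 ≤ m) (hn : 2 ≤ n)
    (C : Finset (ℕ × ℕ)) (hC : MaximalConfig m n C) :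
    (m, 1) ∈ C ∧ (m, n) ∈ C := by
  obtain ⟨⟨hsub, hnb⟩, hmax⟩ := hC
  have hgrid : ∀ a b : ℕ, (a, b) ∈ C → 1 ≤ a ∧ a ≤ m ∧ 1 ≤ b ∧ b ≤ n := by
    intro a b hp
    have := hsub hp
    simpa [Grid, Finset.mem_Icc, and_assoc] using this
  have key : ∀ c : ℕ, c = 1 ∨ c = n → (m, c) ∈ C := by
    intro c hc
    by_contra h
    have hperm : Permissible m n (insert (m, c) C) := by
      refine ⟨Finset.insert_subset ?_ hsub, ?_⟩
      · simp only [Grid, Finset.mem_product, Finset.mem_Icc]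
        omega
      · rintro ⟨a, b⟩ hp ⟨he, hw, hs⟩
        rcases Finset.mem_insert.1 hp with hp1 | hp1
        · rw [Prod.mk.injEq] at hp1
          obtain ⟨rfl, rfl⟩ := hp1
          rcases hc with rfl | rfl
          · rcases Finset.mem_insert.1 hw with h1 | h1
            · rw [Prod.mk.injEq] at h1; omega
            · have := hgrid _ _ h1; omega
          · rcases Finset.mem_insert.1 hs with h1 | h1
            · rw [Prod.mk.injEq] at h1; omega
            · have := hgrid _ _ h1; omega
        · have hb := hgrid _ _ hp1
          have hne := hnb _ hp1
          rcases Finset.mem_insert.1 hs with h3 | h3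
          · rw [Prod.mk.injEq] at h3
            rcases Finset.mem_insert.1 hw with h2 | h2
            · rw [Prod.mk.injEq] at h2; omega
            · have hw' := hgrid _ _ h2
              rcases Finset.mem_insert.1 he with h1 | h1
              · rw [Prod.mk.injEq] at h1; omega
              · have he' := hgrid _ _ h1; omega
          · have hs' := hgrid _ _ h3
            rcases Finset.mem_insert.1 he with h1 | h1
            · rw [Prod.mk.injEq] at h1; omega
            · rcases Finset.mem_insert.1 hw with h2 | h2
              · rw [Prod.mk.injEq] at h2; omega
              · exact hne ⟨h1, h2, h3⟩
    have heq := hmax _ hperm (Finset.subset_insert _ _)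
    exact h (heq ▸ Finset.mem_insert_self _ _)
  exact ⟨key 1 (Or.inl rfl), key n (Or.inr rfl)⟩
end
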